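/- arXiv:math/0010070 — 3 statements merged into one kernel-verified Lean document; each statement's English description precedes it below -/
import Mathlib

section
/- The following are equivalent: (1) every sup-measurable function f : ℝ×ℝ → ℝ is Lebesgue measurable; (2) for every Lebesgue non-measurable set A ⊆ ℝ×ℝ there exists a Borel function f : ℝ → ℝ such that the set {x ∈ ℝ : (x, f(x)) ∈ A} is not Lebesgue measurable. -/
open MeasureTheory

/-- A function `f : ℝ × ℝ → ℝ` is sup-measurable if for every Lebesgue measurable
`g : ℝ → ℝ` the superposition `x ↦ f (x, g x)` is Lebesgue measurable.
(Lebesgue measurability = measurability with respect to the completion of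
Lebesgue measure, i.e. `NullMeasurable`.) -/
def SupMeasurable (f : ℝ × ℝ → ℝ) : Prop :=
  ∀ g : ℝ → ℝ, NullMeasurable g volume → NullMeasurable (fun x => f (x, g x)) volume

/-!
A set is Lebesgue measurable iff its indicator is, and the superposition of `A.indicator 1`
with `g` is the indicator of `{x | (x, g x) ∈ A}`; so (2) is exactly (1) for indicator functions.
Conversely, (1) for a general `f` reduces to its preimages `f ⁻¹' s`, because
`{x | (x, g x) ∈ f ⁻¹' s}` is the preimage of `s` under the superposition. Borel `g` suffice,
since changing `g` on a null set changes `x ↦ f (x, g x)` only on a null set.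
-/

theorem nullMeasurable_indicator_const_iff {α β : Type*} [MeasurableSpace α] [MeasurableSpace β]
    [Zero β] [MeasurableSingletonClass β] {μ : Measure α} {s : Set α} (b : β) [NeZero b] :
    NullMeasurable (s.indicator fun _ => b) μ ↔ NullMeasurableSet s μ :=
  measurable_indicator_const_iff (α := NullMeasurableSpace α μ) b

theorem supMeasurable_iff_forall_measurable {f : ℝ × ℝ → ℝ} :
    SupMeasurable f ↔ ∀ g : ℝ → ℝ, Measurable g → NullMeasurable (fun x => f (x, g x)) volume := by
  refine ⟨fun hf g hg => hf g hg.nullMeasurable, fun hf g hg => ?_⟩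
  obtain ⟨g', hg'_meas, hg_ae⟩ := hg.aemeasurable
  refine (hf g' hg'_meas).congr ?_
  filter_upwards [hg_ae] with x hx
  rw [hx]

theorem supMeasurable_indicator_iff {A : Set (ℝ × ℝ)} :
    SupMeasurable (A.indicator fun _ => 1) ↔
      ∀ g : ℝ → ℝ, Measurable g → NullMeasurableSet {x : ℝ | (x, g x) ∈ A} volume := by
  rw [supMeasurable_iff_forall_measurable]
  refine forall₂_congr fun g _ => ?_
  rw [← nullMeasurable_indicator_const_iff (1 : ℝ)]
  exact Iff.rfl

/-- every sup-measurable function `f : ℝ × ℝ → ℝ` is Lebesgue measurable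
iff for every Lebesgue non-measurable set `A ⊆ ℝ × ℝ` there is a Borel function
`f : ℝ → ℝ` such that `{x | (x, f x) ∈ A}` is not Lebesgue measurable. -/
theorem supMeasurable_measurable_iff :
    (∀ f : ℝ × ℝ → ℝ, SupMeasurable f → NullMeasurable f volume) ↔
    (∀ A : Set (ℝ × ℝ), ¬ NullMeasurableSet A volume →
      ∃ f : ℝ → ℝ, Measurable f ∧
        ¬ NullMeasurableSet {x : ℝ | (x, f x) ∈ A} volume) := by
  constructor
  · intro h A hA
    by_contra! h_sections
    exact hA ((nullMeasurable_indicator_const_iff (1 : ℝ)).1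
      (h _ (supMeasurable_indicator_iff.2 h_sections)))
  · intro h f hf s hs
    by_contra hpre
    obtain ⟨g, hg, hg_section⟩ := h (f ⁻¹' s) hpre
    exact hg_section (hf g hg.nullMeasurable hs)
end

section
/- The following are equivalent: (2) for every Lebesgue non-measurable set A ⊆ ℝ×ℝ there exists a Borel function f : ℝ → ℝ such that {x ∈ ℝ : (x, f(x)) ∈ A} is not Lebesgue measurable; (3) for every non-measurable set A ⊆ 2^ℕ × 2^ℕ there exists a Borel function f : 2^ℕ → 2^ℕ such that {x ∈ 2^ℕ : (x, f(x)) ∈ A} is not measurable. -/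
open MeasureTheory

/-- `μ` is the coin-flipping (uniform product) probability measure on `I → Bool`:
every cylinder determined by finitely many coordinates has the expected measure. -/
def IsCoinMeasure {I : Type*} (μ : Measure (I → Bool)) : Prop :=
  ∀ (s : Finset I) (f : I → Bool),
    μ {x | ∀ i ∈ s, x i = f i} = (2 : ENNReal)⁻¹ ^ s.card

/-- `μ` is the square of the coin-flipping measure on `(ℕ → Bool) × (ℕ → Bool)`. -/
def IsCoinMeasure2 (μ : Measure ((ℕ → Bool) × (ℕ → Bool))) : Prop :=
  ∀ (s t : Finset ℕ) (f g : ℕ → Bool),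
    μ {z | (∀ i ∈ s, z.1 i = f i) ∧ (∀ j ∈ t, z.2 j = g j)} =
      (2 : ENNReal)⁻¹ ^ (s.card + t.card)


open Set

namespace CoinAux


def cyl (s : Finset ℕ) (f : ℕ → Bool) : Set (ℕ → Bool) := {x | ∀ i ∈ s, x i = f i}

lemma measurableSet_cyl (s : Finset ℕ) (f : ℕ → Bool) : MeasurableSet (cyl s f) := by
  have : cyl s f = ⋂ i ∈ s, (fun x : ℕ → Bool => x i) ⁻¹' {f i} := by
    ext x; simp [cyl]
  rw [this]
  exact MeasurableSet.biInter s.countable_toSet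
    (fun i _ => (measurable_pi_apply i) (measurableSet_singleton (f i)))

def cylSet : Set (Set (ℕ → Bool)) := {A | ∃ s f, A = cyl s f}

lemma univ_mem_cylSet : univ ∈ cylSet := ⟨∅, fun _ => true, by ext x; simp [cyl]⟩

lemma isPiSystem_cylSet : IsPiSystem cylSet := by
  rintro _ ⟨s, f, rfl⟩ _ ⟨t, g, rfl⟩ hne
  obtain ⟨z, hzs, hzt⟩ := hne
  refine ⟨s ∪ t, z, ?_⟩
  ext x
  simp only [cyl, mem_inter_iff, mem_setOf_eq, Finset.mem_union]
  constructor
  · rintro ⟨h1, h2⟩ i (hi | hi)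
    · rw [h1 i hi, hzs i hi]
    · rw [h2 i hi, hzt i hi]
  · intro h
    exact ⟨fun i hi => (h i (Or.inl hi)).trans (hzs i hi),
      fun i hi => (h i (Or.inr hi)).trans (hzt i hi)⟩

lemma generateFrom_cylSet :
    MeasurableSpace.generateFrom cylSet = (inferInstance : MeasurableSpace (ℕ → Bool)) := by
  apply le_antisymm
  · exact MeasurableSpace.generateFrom_le (by rintro _ ⟨s, f, rfl⟩; exact measurableSet_cyl s f)
  · refine iSup_le fun i => ?_
    have hmeas : ∀ b : Bool, MeasurableSet[MeasurableSpace.generateFrom cylSet]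
        {x : ℕ → Bool | x i = b} := by
      intro b
      apply MeasurableSpace.measurableSet_generateFrom
      exact ⟨{i}, fun _ => b, by ext x; simp [cyl]⟩
    refine MeasurableSpace.comap_le_iff_le_map.2 fun t _ => ?_
    show MeasurableSet[MeasurableSpace.generateFrom cylSet] ((fun x : ℕ → Bool => x i) ⁻¹' t)
    have : (fun x : ℕ → Bool => x i) ⁻¹' t = ⋃ b ∈ t, {x : ℕ → Bool | x i = b} := by
      ext x; simp
    rw [this]
    exact MeasurableSet.biUnion t.to_countable fun b _ => hmeas b

lemma isProb_of_coin {μ : Measure (ℕ → Bool)} (hμ : IsCoinMeasure μ) :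
    IsProbabilityMeasure μ := by
  constructor
  have := hμ ∅ (fun _ => true)
  simpa using this

lemma coin_unique {μ ν : Measure (ℕ → Bool)} (hμ : IsCoinMeasure μ) (hν : IsCoinMeasure ν) :
    μ = ν := by
  haveI := isProb_of_coin hμ
  haveI := isProb_of_coin hν
  refine ext_of_generate_finite cylSet generateFrom_cylSet.symm isPiSystem_cylSet ?_ (by simp)
  rintro _ ⟨s, f, rfl⟩
  rw [show cyl s f = {x | ∀ i ∈ s, x i = f i} from rfl, hμ s f, hν s f]

lemma isCountablySpanning_cylSet : IsCountablySpanning cylSet :=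
  ⟨fun _ => univ, fun _ => univ_mem_cylSet, by simp [Set.iUnion_const]⟩

lemma coin2_eq_prod {μ : Measure (ℕ → Bool)} (hμ : IsCoinMeasure μ)
    {μ₂ : Measure ((ℕ → Bool) × (ℕ → Bool))} (hμ₂ : IsCoinMeasure2 μ₂) :
    μ₂ = μ.prod μ := by
  haveI := isProb_of_coin hμ
  haveI : IsProbabilityMeasure μ₂ := by
    constructor
    have := hμ₂ ∅ ∅ (fun _ => true) (fun _ => true)
    simpa using this
  have hgen := generateFrom_prod_eq (C := cylSet) (D := cylSet)
    isCountablySpanning_cylSet isCountablySpanning_cylSet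
  rw [generateFrom_cylSet] at hgen
  refine ext_of_generate_finite _ hgen
    (isPiSystem_cylSet.prod isPiSystem_cylSet) ?_ (by simp)
  rintro _ ⟨_, ⟨s, f, rfl⟩, _, ⟨t, g, rfl⟩, rfl⟩
  have h1 : cyl s f ×ˢ cyl t g
      = {z : (ℕ → Bool) × (ℕ → Bool) | (∀ i ∈ s, z.1 i = f i) ∧ (∀ j ∈ t, z.2 j = g j)} := by
    ext z; simp [cyl, Set.mem_prod]
  show μ₂ (cyl s f ×ˢ cyl t g) = (μ.prod μ) (cyl s f ×ˢ cyl t g)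
  rw [h1, hμ₂ s t f g, ← h1, Measure.prod_prod,
    show μ (cyl s f) = 2⁻¹ ^ s.card from hμ s f, show μ (cyl t g) = 2⁻¹ ^ t.card from hμ t g,
    pow_add]



noncomputable def gR (x : ℕ → Bool) : ℝ := ∑' n, if x n then (2:ℝ)⁻¹ ^ (n+1) else 0

def allOnes : ℕ → Bool := fun _ => true

open Classical in
noncomputable def gg (x : ℕ → Bool) : ℝ := if x = allOnes then 0 else gR x

noncomputable def hR (v : ℝ) : ℕ → Bool := fun i => decide (⌊v * 2 ^ (i+1)⌋₊ % 2 = 1)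

def S : Set (ℕ → Bool) := {x | ∀ N, ∃ n, N ≤ n ∧ x n = false}

lemma summable_geo : Summable (fun n : ℕ => (2:ℝ)⁻¹ ^ (n+1)) := by
  have := (summable_geometric_of_lt_one (by norm_num : (0:ℝ) ≤ 2⁻¹) (by norm_num)).mul_left 2⁻¹
  refine this.congr fun n => ?_
  rw [← pow_succ']

lemma summable_g (x : ℕ → Bool) : Summable (fun n => if x n then (2:ℝ)⁻¹ ^ (n+1) else 0) := by
  refine Summable.of_nonneg_of_le (fun n => ?_) (fun n => ?_) summable_geo
  · split <;> positivity
  · split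
    · exact le_refl _
    · positivity

lemma tsum_geo : ∑' n : ℕ, (2:ℝ)⁻¹ ^ (n+1) = 1 := by
  have h : ∀ n : ℕ, (2:ℝ)⁻¹ ^ (n+1) = 2⁻¹ * 2⁻¹ ^ n := fun n => by rw [← pow_succ']
  rw [tsum_congr h, tsum_mul_left, tsum_geometric_of_lt_one (by norm_num) (by norm_num)]
  norm_num

lemma tsum_geo_add (N : ℕ) : ∑' n : ℕ, (2:ℝ)⁻¹ ^ (n + N + 1) = (2:ℝ)⁻¹ ^ N := by
  have h : ∀ n : ℕ, (2:ℝ)⁻¹ ^ (n + N + 1) = (2⁻¹:ℝ)^N * 2⁻¹ ^ (n+1) := fun n => by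
    rw [← pow_add]; ring_nf
  rw [tsum_congr h, tsum_mul_left, tsum_geo, mul_one]

lemma gR_nonneg (x : ℕ → Bool) : 0 ≤ gR x :=
  tsum_nonneg fun n => by split <;> positivity

lemma gR_le_one (x : ℕ → Bool) : gR x ≤ 1 := by
  rw [← tsum_geo]
  refine Summable.tsum_le_tsum (fun n => ?_) (summable_g x) summable_geo
  split
  · exact le_refl _
  · positivity

lemma gR_lt_one {x : ℕ → Bool} {n : ℕ} (hn : x n = false) : gR x < 1 := by
  rw [← tsum_geo]
  refine Summable.tsum_lt_tsum (i := n) (fun m => ?_) ?_ (summable_g x) summable_geo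
  · split
    · exact le_refl _
    · positivity
  · simpa [hn] using (by positivity : (0:ℝ) < 2⁻¹ ^ (n+1))

lemma allOnes_not_mem_S : allOnes ∉ S := by
  intro h
  obtain ⟨n, _, hn⟩ := h 0
  simp [allOnes] at hn

lemma gg_mem_Ico (x : ℕ → Bool) : gg x ∈ Ico (0:ℝ) 1 := by
  rw [gg]
  split
  · norm_num
  · rename_i hx
    have : ∃ n, x n = false := by
      by_contra h
      push_neg at h
      exact hx (funext fun n => by simpa [allOnes] using h n)
    obtain ⟨n, hn⟩ := this
    exact ⟨gR_nonneg x, gR_lt_one hn⟩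

/-- Floor formula for the binary sum. -/
lemma floor_gR_mul {x : ℕ → Bool} (i : ℕ) (hx : ∃ m, i + 1 ≤ m ∧ x m = false) :
    ⌊gR x * 2 ^ (i+1)⌋₊ = ∑ n ∈ Finset.range (i+1), (if x n then 2 ^ (i - n) else 0) ∧
    (∑ n ∈ Finset.range (i+1), (if x n then 2 ^ (i - n) else 0)) % 2
      = (if x i then 1 else 0) := by
  set N := i + 1 with hN
  set K : ℕ := ∑ n ∈ Finset.range N, (if x n then 2 ^ (i - n) else 0) with hK
  have hsplit := Summable.sum_add_tsum_nat_add (f := fun n => if x n then (2:ℝ)⁻¹ ^ (n+1) else 0)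
    N (summable_g x)
  -- head sum times 2^N equals K
  have hhead : (∑ n ∈ Finset.range N, (if x n then (2:ℝ)⁻¹ ^ (n+1) else 0)) * 2 ^ N
      = (K : ℝ) := by
    rw [hK, Finset.sum_mul, Nat.cast_sum]
    refine Finset.sum_congr rfl fun n hn => ?_
    have hnN : n < N := Finset.mem_range.1 hn
    split
    · push_cast
      rw [inv_pow, inv_mul_eq_div, div_eq_iff (by positivity), ← pow_add]
      congr 1
      omega
    · simp
  -- tail
  set ρ : ℝ := (∑' n, if x (n + N) then (2:ℝ)⁻¹ ^ (n + N + 1) else 0) * 2 ^ N with hρ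
  have hρ0 : 0 ≤ ρ := by
    apply mul_nonneg _ (by positivity)
    exact tsum_nonneg fun n => by split <;> positivity
  have hρ1 : ρ < 1 := by
    obtain ⟨m, hm, hmf⟩ := hx
    have hsum : Summable (fun n => if x (n + N) then (2:ℝ)⁻¹ ^ (n + N + 1) else 0) :=
      ((summable_nat_add_iff N).2 (summable_g x)).congr (fun n => rfl)
    have hlt : (∑' n, if x (n + N) then (2:ℝ)⁻¹ ^ (n + N + 1) else 0) < (2:ℝ)⁻¹ ^ N := by
      rw [← tsum_geo_add N]
      refine Summable.tsum_lt_tsum (i := m - N) (fun n => ?_) ?_ hsum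
        ((summable_nat_add_iff N).2 summable_geo |>.congr (fun n => by push_cast; ring_nf))
      · split
        · exact le_refl _
        · positivity
      · have hm' : m - N + N = m := by omega
        rw [hm', hmf]
        simpa using (by positivity : (0:ℝ) < 2⁻¹ ^ (m+1))
    calc ρ < (2:ℝ)⁻¹ ^ N * 2 ^ N := by
            rw [hρ]; exact mul_lt_mul_of_pos_right hlt (by positivity)
      _ = 1 := by rw [inv_pow, inv_mul_cancel₀ (by positivity)]
  have hxN : gR x * 2 ^ N = K + ρ := by
    rw [gR, ← hsplit, add_mul, hhead, hρ]
  have hfloor : ⌊gR x * 2 ^ N⌋₊ = K := by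
    rw [hxN]
    rw [Nat.floor_eq_iff (by positivity)]
    constructor
    · linarith
    · push_cast; linarith
  refine ⟨hfloor, ?_⟩
  rw [hK, Finset.sum_range_succ]
  have heven : 2 ∣ ∑ n ∈ Finset.range i, (if x n then 2 ^ (i - n) else 0) := by
    refine Finset.dvd_sum fun n hn => ?_
    have hni : n < i := Finset.mem_range.1 hn
    split
    · exact dvd_pow_self 2 (by omega)
    · exact dvd_zero 2
  obtain ⟨c, hc⟩ := heven
  rw [hc, Nat.sub_self, pow_zero]
  cases x i <;> simp <;> omega

lemma hR_gR {x : ℕ → Bool} (hx : x ∈ S) : hR (gR x) = x := by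
  funext i
  obtain ⟨hfl, hmod⟩ := floor_gR_mul i (hx (i+1))
  show decide (⌊gR x * 2 ^ (i+1)⌋₊ % 2 = 1) = x i
  rw [hfl, hmod]
  cases hxi : x i <;> simp




lemma hR_eq_testBit {v : ℝ} {i N : ℕ} (h : i < N) :
    hR v i = Nat.testBit ⌊v * 2 ^ N⌋₊ (N - 1 - i) := by
  rw [Nat.testBit_eq_decide_div_mod_eq]
  show decide (⌊v * 2 ^ (i+1)⌋₊ % 2 = 1) = _
  have key : ⌊v * 2 ^ (i+1)⌋₊ = ⌊v * 2 ^ N⌋₊ / 2 ^ (N - 1 - i) := by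
    rw [← Nat.floor_div_natCast (v * 2 ^ N) (2 ^ (N - 1 - i))]
    congr 1
    push_cast
    rw [mul_div_assoc]
    congr 1
    rw [eq_div_iff (by positivity), ← pow_add]
    congr 1
    omega
  rw [key]

lemma floor_eq_iff_mem_Ico {v : ℝ} {N k : ℕ} (hk : k < 2 ^ N) :
    (v ∈ Ico (0:ℝ) 1 ∧ ⌊v * 2 ^ N⌋₊ = k) ↔ v ∈ Ico ((k : ℝ) / 2 ^ N) ((k + 1 : ℝ) / 2 ^ N) := by
  have h2 : (0:ℝ) < 2 ^ N := by positivity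
  constructor
  · rintro ⟨⟨hv0, hv1⟩, hfl⟩
    have := (Nat.floor_eq_iff (by positivity)).1 hfl
    constructor
    · rw [div_le_iff₀ h2]; linarith [this.1]
    · rw [lt_div_iff₀ h2]; push_cast; linarith [this.2]
  · rintro ⟨h1, h2'⟩
    have hv0 : (0:ℝ) ≤ v := le_trans (by positivity) h1
    have hv1 : v < 1 := by
      have : ((k:ℝ) + 1) / 2 ^ N ≤ 1 := by
        rw [div_le_one h2]
        have : (k:ℝ) + 1 ≤ (2:ℝ) ^ N := by exact_mod_cast Nat.succ_le_of_lt hk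
        linarith
      linarith
    refine ⟨⟨hv0, hv1⟩, ?_⟩
    rw [Nat.floor_eq_iff (by positivity)]
    constructor
    · rw [div_le_iff₀ h2] at h1; linarith
    · rw [lt_div_iff₀ h2] at h2'; push_cast; linarith

lemma floor_lt_of_mem {v : ℝ} (hv : v ∈ Ico (0:ℝ) 1) (N : ℕ) : ⌊v * 2 ^ N⌋₊ < 2 ^ N := by
  rw [Nat.floor_lt (mul_nonneg hv.1 (by positivity))]
  push_cast
  calc v * 2 ^ N < 1 * 2 ^ N := mul_lt_mul_of_pos_right hv.2 (by positivity)
    _ = 2 ^ N := one_mul _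

lemma hR_injOn : Set.InjOn hR (Ico (0:ℝ) 1) := by
  intro u hu v hv huv
  by_contra hne
  have habs : 0 < |u - v| := abs_pos.2 (sub_ne_zero.2 hne)
  obtain ⟨N, hN⟩ := exists_pow_lt_of_lt_one habs (by norm_num : (1:ℝ)/2 < 1)
  have hfl : ⌊u * 2 ^ N⌋₊ = ⌊v * 2 ^ N⌋₊ := by
    apply Nat.eq_of_testBit_eq
    intro j
    rcases lt_or_ge j N with hj | hj
    · have h1 : N - 1 - (N - 1 - j) = j := by omega
      have h2 : N - 1 - j < N := by omega
      have e1 := hR_eq_testBit (v := u) h2 (N := N)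
      have e2 := hR_eq_testBit (v := v) h2 (N := N)
      rw [h1] at e1 e2
      rw [← e1, ← e2, huv]
    · have b1 : ⌊u * 2 ^ N⌋₊ < 2 ^ j :=
        lt_of_lt_of_le (floor_lt_of_mem hu N) (Nat.pow_le_pow_right (by norm_num) hj)
      have b2 : ⌊v * 2 ^ N⌋₊ < 2 ^ j :=
        lt_of_lt_of_le (floor_lt_of_mem hv N) (Nat.pow_le_pow_right (by norm_num) hj)
      rw [Nat.testBit_lt_two_pow b1, Nat.testBit_lt_two_pow b2]
  -- derive |u - v| < 1/2^N
  set k := ⌊u * 2 ^ N⌋₊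
  have h2 : (0:ℝ) < 2 ^ N := by positivity
  have hu1 : (k:ℝ) ≤ u * 2 ^ N := Nat.floor_le (mul_nonneg hu.1 (by positivity))
  have hu2 : u * 2 ^ N < k + 1 := Nat.lt_floor_add_one _
  have hv1 : (k:ℝ) ≤ v * 2 ^ N := by rw [hfl]; exact Nat.floor_le (mul_nonneg hv.1 (by positivity))
  have hv2 : v * 2 ^ N < k + 1 := by
    have := Nat.lt_floor_add_one (v * 2 ^ N)
    rw [← hfl] at this
    exact this
  have hlt : |u - v| < 1 / 2 ^ N := by
    rw [abs_sub_lt_iff]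
    constructor
    · rw [lt_div_iff₀ h2, sub_mul]; linarith
    · rw [lt_div_iff₀ h2, sub_mul]; linarith
  rw [div_pow, one_pow] at hN
  linarith

lemma count_testBit : ∀ (N : ℕ) (s : Finset ℕ) (f : ℕ → Bool), (∀ i ∈ s, i < N) →
    ((Finset.range (2^N)).filter (fun k => ∀ i ∈ s, Nat.testBit k i = f i)).card
      = 2 ^ (N - s.card) := by
  intro N
  induction N with
  | zero =>
    intro s f hs
    have : s = ∅ := Finset.eq_empty_of_forall_notMem (fun i hi => Nat.not_lt_zero i (hs i hi))
    subst this
    simp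
  | succ N ih =>
    intro s f hs
    have hsplit : Finset.range (2 ^ (N+1))
        = Finset.range (2^N) ∪ (Finset.range (2^N)).map (addLeftEmbedding (2^N)) := by
      rw [← Finset.range_add]
      congr 1
      ring
    have hdisj : Disjoint (Finset.range (2^N))
        ((Finset.range (2^N)).map (addLeftEmbedding (2^N))) := by
      rw [Finset.disjoint_left]
      intro k hk hk'
      simp only [Finset.mem_map, Finset.mem_range, addLeftEmbedding_apply] at hk hk'
      omega
    rw [hsplit, Finset.filter_union,
      Finset.card_union_of_disjoint (Finset.disjoint_filter_filter hdisj),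
      Finset.filter_map, Finset.card_map]
    by_cases hNs : N ∈ s
    · have hcard : s.card = (s.erase N).card + 1 := by
        rw [Finset.card_erase_of_mem hNs]
        have : 1 ≤ s.card := Finset.card_pos.2 ⟨N, hNs⟩
        omega
      have hs' : ∀ i ∈ s.erase N, i < N := fun i hi => by
        have := hs i (Finset.mem_of_mem_erase hi)
        have := Finset.ne_of_mem_erase hi
        omega
      have hcard' : (s.erase N).card ≤ N := by
        have : s.erase N ⊆ Finset.range N := fun i hi => Finset.mem_range.2 (hs' i hi)
        simpa using Finset.card_le_card this
      cases hfN : f N with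
      | false =>
        -- second part empty
        have h2 : (Finset.range (2^N)).filter
            ((fun k => ∀ i ∈ s, Nat.testBit k i = f i) ∘ addLeftEmbedding (2^N)) = ∅ := by
          refine Finset.filter_false_of_mem fun j hj => ?_
          simp only [Function.comp, addLeftEmbedding_apply]
          intro hcond
          have := hcond N hNs
          rw [Nat.testBit_two_pow_add_eq,
            Nat.testBit_lt_two_pow (Finset.mem_range.1 hj), hfN] at this
          exact Bool.noConfusion this
        have h1 : (Finset.range (2^N)).filter (fun k => ∀ i ∈ s, Nat.testBit k i = f i)
            = (Finset.range (2^N)).filter (fun k => ∀ i ∈ s.erase N, Nat.testBit k i = f i) := by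
          refine Finset.filter_congr fun k hk => ?_
          constructor
          · intro h i hi; exact h i (Finset.mem_of_mem_erase hi)
          · intro h i hi
            rcases eq_or_ne i N with rfl | hne
            · rw [Nat.testBit_lt_two_pow (Finset.mem_range.1 hk), hfN]
            · exact h i (Finset.mem_erase.2 ⟨hne, hi⟩)
        rw [h1, h2, ih (s.erase N) f hs', Finset.card_empty]
        rw [hcard]
        have : N + 1 - ((s.erase N).card + 1) = N - (s.erase N).card := by omega
        rw [this]
        omega
      | true =>
        have h1 : (Finset.range (2^N)).filter (fun k => ∀ i ∈ s, Nat.testBit k i = f i) = ∅ := by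
          refine Finset.filter_false_of_mem fun k hk => ?_
          intro hcond
          have := hcond N hNs
          rw [Nat.testBit_lt_two_pow (Finset.mem_range.1 hk), hfN] at this
          exact Bool.noConfusion this
        have h2 : (Finset.range (2^N)).filter
            ((fun k => ∀ i ∈ s, Nat.testBit k i = f i) ∘ addLeftEmbedding (2^N))
            = (Finset.range (2^N)).filter (fun j => ∀ i ∈ s.erase N, Nat.testBit j i = f i) := by
          refine Finset.filter_congr fun j hj => ?_
          simp only [Function.comp, addLeftEmbedding_apply]
          constructor
          · intro h i hi
            rw [← h i (Finset.mem_of_mem_erase hi),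
              Nat.testBit_two_pow_add_gt (hs' i hi)]
          · intro h i hi
            rcases eq_or_ne i N with rfl | hne
            · rw [Nat.testBit_two_pow_add_eq,
                Nat.testBit_lt_two_pow (Finset.mem_range.1 hj), hfN]
              rfl
            · rw [Nat.testBit_two_pow_add_gt (hs' i (Finset.mem_erase.2 ⟨hne, hi⟩))]
              exact h i (Finset.mem_erase.2 ⟨hne, hi⟩)
        rw [h1, h2, ih (s.erase N) f hs', Finset.card_empty]
        rw [hcard]
        have : N + 1 - ((s.erase N).card + 1) = N - (s.erase N).card := by omega
        rw [this]
        omega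
    · have hs' : ∀ i ∈ s, i < N := fun i hi => by
        have h1 := hs i hi
        have h2 : i ≠ N := fun h => hNs (h ▸ hi)
        omega
      have hcard' : s.card ≤ N := by
        have : s ⊆ Finset.range N := fun i hi => Finset.mem_range.2 (hs' i hi)
        simpa using Finset.card_le_card this
      have h2 : (Finset.range (2^N)).filter
          ((fun k => ∀ i ∈ s, Nat.testBit k i = f i) ∘ addLeftEmbedding (2^N))
          = (Finset.range (2^N)).filter (fun j => ∀ i ∈ s, Nat.testBit j i = f i) := by
        refine Finset.filter_congr fun j hj => ?_
        simp only [Function.comp, addLeftEmbedding_apply]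
        constructor
        · intro h i hi
          rw [← h i hi, Nat.testBit_two_pow_add_gt (hs' i hi)]
        · intro h i hi
          rw [Nat.testBit_two_pow_add_gt (hs' i hi)]
          exact h i hi
      rw [h2, ih s f hs']
      have : N + 1 - s.card = (N - s.card) + 1 := by omega
      rw [this, pow_succ]
      ring


noncomputable def lam0 : Measure ℝ := volume.restrict (Ico (0:ℝ) 1)

instance : IsProbabilityMeasure lam0 := by
  constructor
  rw [lam0, Measure.restrict_apply_univ, Real.volume_Ico]
  norm_num

lemma hR_measurable : Measurable hR := by
  refine measurable_pi_lambda hR fun i => ?_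
  have h1 : Measurable fun v : ℝ => ⌊v * 2 ^ (i+1)⌋₊ :=
    Nat.measurable_floor.comp (measurable_id.mul_const ((2:ℝ) ^ (i+1)))
  exact (measurable_from_top (f := fun k : ℕ => decide (k % 2 = 1))).comp h1

lemma measurableSet_allOnes : MeasurableSet {allOnes} := by
  have : ({allOnes} : Set (ℕ → Bool)) = ⋂ n, (fun x : ℕ → Bool => x n) ⁻¹' {true} := by
    ext x
    simp only [mem_singleton_iff, mem_iInter, mem_preimage]
    constructor
    · rintro rfl n; rfl
    · intro h; exact funext fun n => h n
  rw [this]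
  exact MeasurableSet.iInter fun n => (measurable_pi_apply n) (measurableSet_singleton _)

lemma gR_continuous : Continuous gR := by
  refine continuous_tsum (f := fun n (x : ℕ → Bool) => if x n then (2:ℝ)⁻¹ ^ (n+1) else 0)
    (fun n => ?_) summable_geo (fun n x => ?_)
  · exact (continuous_of_discreteTopology
      (f := fun b : Bool => if b then (2:ℝ)⁻¹ ^ (n+1) else 0)).comp (continuous_apply n)
  · rw [Real.norm_eq_abs]
    show |(if x n then (2:ℝ)⁻¹ ^ (n+1) else 0)| ≤ (2:ℝ)⁻¹ ^ (n+1)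
    split
    · rw [abs_of_nonneg (by positivity)]
    · simpa using (by positivity : (0:ℝ) ≤ 2⁻¹ ^ (n+1))

lemma gg_measurable : Measurable gg := by
  unfold gg
  refine Measurable.ite ?_ measurable_const gR_continuous.measurable
  simpa [Set.setOf_eq_eq_singleton] using measurableSet_allOnes

lemma hR_gg {x : ℕ → Bool} (hx : x ∈ S) : hR (gg x) = x := by
  have hne : x ≠ allOnes := fun h => allOnes_not_mem_S (h ▸ hx)
  rw [gg, if_neg hne]
  exact hR_gR hx

lemma measurableSet_S : MeasurableSet S := by
  have : S = ⋂ N, ⋃ n, ⋃ (_ : N ≤ n), (fun x : ℕ → Bool => x n) ⁻¹' {false} := by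
    ext x
    simp [S]
  rw [this]
  exact MeasurableSet.iInter fun N => MeasurableSet.iUnion fun n =>
    MeasurableSet.iUnion fun _ => (measurable_pi_apply n) (measurableSet_singleton _)

/-- The pushforward of Lebesgue measure on `[0,1)` under the binary digit map is the
coin-flipping measure. -/
lemma coin_map : IsCoinMeasure (Measure.map hR lam0) := by
  intro s f
  have hNpos : 0 < s.sup id + 1 := Nat.succ_pos _
  set N := s.sup id + 1 with hN
  have hiN : ∀ i ∈ s, i < N := fun i hi =>
    lt_of_le_of_lt (Finset.le_sup (f := id) hi) (Nat.lt_succ_self _)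
  set K := (Finset.range (2^N)).filter (fun k => ∀ i ∈ s, Nat.testBit k (N-1-i) = f i) with hK
  have hcylset : {x : ℕ → Bool | ∀ i ∈ s, x i = f i} = cyl s f := rfl
  rw [hcylset, Measure.map_apply hR_measurable (measurableSet_cyl s f), lam0,
    Measure.restrict_apply' measurableSet_Ico]
  have hset : hR ⁻¹' (cyl s f) ∩ Ico (0:ℝ) 1
      = ⋃ k ∈ K, Ico ((k:ℝ)/2^N) (((k:ℝ)+1)/2^N) := by
    ext v
    simp only [mem_inter_iff, mem_preimage, mem_iUnion, exists_prop]
    constructor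
    · rintro ⟨hpre, hv⟩
      have hklt : ⌊v * 2 ^ N⌋₊ < 2 ^ N := floor_lt_of_mem hv N
      refine ⟨⌊v * 2 ^ N⌋₊, ?_, ?_⟩
      · rw [hK, Finset.mem_filter]
        refine ⟨Finset.mem_range.2 hklt, fun i hi => ?_⟩
        rw [← hR_eq_testBit (hiN i hi)]
        exact hpre i hi
      · exact (floor_eq_iff_mem_Ico hklt).1 ⟨hv, rfl⟩
    · rintro ⟨k, hkK, hvI⟩
      rw [hK, Finset.mem_filter, Finset.mem_range] at hkK
      obtain ⟨hklt, hcond⟩ := hkK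
      obtain ⟨hv, hfl⟩ := (floor_eq_iff_mem_Ico hklt).2 hvI
      refine ⟨fun i hi => ?_, hv⟩
      rw [hR_eq_testBit (hiN i hi), hfl]
      exact hcond i hi
  rw [hset]
  have hdisj : (K : Set ℕ).Pairwise
      (Function.onFun Disjoint fun k => Ico ((k:ℝ)/2^N) (((k:ℝ)+1)/2^N)) := by
    intro k hk k' hk' hne
    rw [Function.onFun]
    rw [Set.disjoint_left]
    intro v hv hv'
    rw [hK] at hk hk'
    simp only [Finset.coe_filter, mem_setOf_eq, Finset.mem_range] at hk hk'
    have h1 := (floor_eq_iff_mem_Ico hk.1).2 hv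
    have h2 := (floor_eq_iff_mem_Ico hk'.1).2 hv'
    exact hne (h1.2 ▸ h2.2)
  rw [measure_biUnion_finset hdisj (fun k _ => measurableSet_Ico)]
  have hvol : ∀ k ∈ K, volume (Ico ((k:ℝ)/2^N) (((k:ℝ)+1)/2^N)) = (2:ENNReal)⁻¹ ^ N := by
    intro k _
    rw [Real.volume_Ico]
    have harith : ((k:ℝ)+1)/2^N - (k:ℝ)/2^N = (2⁻¹:ℝ)^N := by
      rw [inv_pow]
      field_simp
      ring
    have h21 : ENNReal.ofReal ((2:ℝ)⁻¹) = (2:ENNReal)⁻¹ := by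
      rw [ENNReal.ofReal_inv_of_pos (by norm_num)]
      norm_num
    rw [harith, ENNReal.ofReal_pow (by norm_num), h21]
  rw [Finset.sum_congr rfl hvol, Finset.sum_const]
  -- count
  have hcount : K.card = 2 ^ (N - s.card) := by
    set s₂ := s.image (fun i => N - 1 - i) with hs₂
    have hinj : Set.InjOn (fun i => N - 1 - i) s := by
      intro i hi j hj hij
      have h1 := hiN i hi
      have h2 := hiN j hj
      simp only at hij
      omega
    have hcards₂ : s₂.card = s.card := Finset.card_image_of_injOn hinj
    have hs₂lt : ∀ j ∈ s₂, j < N := by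
      intro j hj
      rw [hs₂, Finset.mem_image] at hj
      obtain ⟨i, _, rfl⟩ := hj
      omega
    have hKeq : K = (Finset.range (2^N)).filter
        (fun k => ∀ j ∈ s₂, Nat.testBit k j = f (N - 1 - j)) := by
      rw [hK]
      refine Finset.filter_congr fun k _ => ?_
      constructor
      · intro h j hj
        rw [hs₂, Finset.mem_image] at hj
        obtain ⟨i, hi, rfl⟩ := hj
        have : N - 1 - (N - 1 - i) = i := by
          have := hiN i hi
          omega
        rw [this]
        exact h i hi
      · intro h i hi
        have hmem : N - 1 - i ∈ s₂ := Finset.mem_image_of_mem _ hi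
        have := h _ hmem
        have heq : N - 1 - (N - 1 - i) = i := by
          have := hiN i hi
          omega
        rwa [heq] at this
    rw [hKeq, count_testBit N s₂ _ hs₂lt, hcards₂]
  rw [hcount]
  have hcle : s.card ≤ N := by
    have : s ⊆ Finset.range N := fun i hi => Finset.mem_range.2 (hiN i hi)
    simpa using Finset.card_le_card this
  rw [nsmul_eq_mul]
  push_cast
  have key : (2:ENNReal)⁻¹ ^ N = 2⁻¹ ^ (N - s.card) * 2⁻¹ ^ s.card := by
    rw [← pow_add]
    congr 1
    omega
  rw [key, ← mul_assoc, ← mul_pow, ENNReal.mul_inv_cancel (by norm_num) (by norm_num),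
    one_pow, one_mul]

lemma mu_S_compl {μ : Measure (ℕ → Bool)} (hμ : IsCoinMeasure μ) : μ Sᶜ = 0 := by
  have hT : ∀ N : ℕ, μ {x : ℕ → Bool | ∀ n, N ≤ n → x n = true} = 0 := by
    intro N
    have hle : ∀ k : ℕ, μ {x : ℕ → Bool | ∀ n, N ≤ n → x n = true} ≤ (2:ENNReal)⁻¹ ^ k := by
      intro k
      have hsub : {x : ℕ → Bool | ∀ n, N ≤ n → x n = true}
          ⊆ {x : ℕ → Bool | ∀ i ∈ Finset.Ico N (N+k), x i = allOnes i} := by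
        intro x hx i hi
        rw [Finset.mem_Ico] at hi
        exact hx i hi.1
      have := hμ (Finset.Ico N (N+k)) allOnes
      rw [Nat.card_Ico] at this
      simp only [Nat.add_sub_cancel_left] at this
      exact le_trans (measure_mono hsub) (le_of_eq this)
    have htend : Filter.Tendsto (fun k : ℕ => (2:ENNReal)⁻¹ ^ k) Filter.atTop (nhds 0) :=
      ENNReal.tendsto_pow_atTop_nhds_zero_of_lt_one (by
        rw [ENNReal.inv_lt_one]
        exact ENNReal.one_lt_two)
    have := ge_of_tendsto' htend hle
    simpa using this
  have hsub : Sᶜ ⊆ ⋃ N : ℕ, {x : ℕ → Bool | ∀ n, N ≤ n → x n = true} := by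
    intro x hx
    simp only [S, mem_compl_iff, mem_setOf_eq, not_forall] at hx
    obtain ⟨N, hN⟩ := hx
    push_neg at hN
    refine mem_iUnion.2 ⟨N, fun n hn => ?_⟩
    have := hN n hn
    simpa using this
  exact measure_mono_null hsub (measure_iUnion_null fun N => hT N)

lemma ae_gghR : ∀ᵐ v ∂lam0, gg (hR v) = v := by
  have h1 : ∀ᵐ v ∂lam0, v ∈ Ico (0:ℝ) 1 := by
    rw [lam0]
    exact ae_restrict_mem measurableSet_Ico
  have h2 : ∀ᵐ v ∂lam0, hR v ∈ S := by
    rw [ae_iff]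
    have : {v | ¬ hR v ∈ S} = hR ⁻¹' Sᶜ := rfl
    rw [this, ← Measure.map_apply hR_measurable measurableSet_S.compl]
    exact mu_S_compl coin_map
  filter_upwards [h1, h2] with v hv hvS
  have hu : gg (hR v) ∈ Ico (0:ℝ) 1 := gg_mem_Ico _
  have h : hR (gg (hR v)) = hR v := hR_gg hvS
  exact hR_injOn hu hv h

lemma mu_eq {μ : Measure (ℕ → Bool)} (hμ : IsCoinMeasure μ) : μ = Measure.map hR lam0 :=
  coin_unique hμ coin_map

lemma map_gg {μ : Measure (ℕ → Bool)} (hμ : IsCoinMeasure μ) : Measure.map gg μ = lam0 := by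
  rw [mu_eq hμ, Measure.map_map gg_measurable hR_measurable]
  have hae : (gg ∘ hR) =ᵐ[lam0] id := by
    filter_upwards [ae_gghR] with v hv
    exact hv
  rw [Measure.map_congr hae, Measure.map_id]

lemma qmp_gg {μ : Measure (ℕ → Bool)} (hμ : IsCoinMeasure μ) :
    Measure.QuasiMeasurePreserving gg μ volume :=
  ⟨gg_measurable, by
    rw [map_gg hμ, lam0]
    exact Measure.absolutelyContinuous_of_le Measure.restrict_le_self⟩

lemma qmp_hR {μ : Measure (ℕ → Bool)} (hμ : IsCoinMeasure μ) :
    Measure.QuasiMeasurePreserving hR lam0 μ :=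
  ⟨hR_measurable, Measure.absolutelyContinuous_of_le (le_of_eq (mu_eq hμ).symm)⟩

lemma restrict_sq : (volume : Measure (ℝ × ℝ)).restrict (Ico (0:ℝ) 1 ×ˢ Ico (0:ℝ) 1)
    = lam0.prod lam0 := by
  rw [Measure.volume_eq_prod, lam0, Measure.prod_restrict]

lemma qmp_gg2 {μ : Measure (ℕ → Bool)} (hμ : IsCoinMeasure μ)
    {μ₂ : Measure ((ℕ → Bool) × (ℕ → Bool))} (hμ₂ : IsCoinMeasure2 μ₂) :
    Measure.QuasiMeasurePreserving (Prod.map gg gg) μ₂ (volume : Measure (ℝ × ℝ)) := by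
  haveI := isProb_of_coin hμ
  refine ⟨gg_measurable.prodMap gg_measurable, ?_⟩
  rw [coin2_eq_prod hμ hμ₂, ← Measure.map_prod_map _ _ gg_measurable gg_measurable,
    map_gg hμ, Measure.volume_eq_prod]
  exact Measure.AbsolutelyContinuous.prod
    (Measure.absolutelyContinuous_of_le Measure.restrict_le_self)
    (Measure.absolutelyContinuous_of_le Measure.restrict_le_self)

lemma qmp_hR2 {μ : Measure (ℕ → Bool)} (hμ : IsCoinMeasure μ)
    {μ₂ : Measure ((ℕ → Bool) × (ℕ → Bool))} (hμ₂ : IsCoinMeasure2 μ₂) :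
    Measure.QuasiMeasurePreserving (Prod.map hR hR)
      ((volume : Measure (ℝ × ℝ)).restrict (Ico (0:ℝ) 1 ×ˢ Ico (0:ℝ) 1)) μ₂ := by
  refine ⟨hR_measurable.prodMap hR_measurable, ?_⟩
  rw [restrict_sq, ← Measure.map_prod_map _ _ hR_measurable hR_measurable,
    ← mu_eq hμ, ← coin2_eq_prod hμ hμ₂]

lemma ae_set_eq {α : Type*} [MeasurableSpace α] {ν : Measure α} {E s t : Set α}
    (hE : ν Eᶜ = 0) (h : ∀ x ∈ E, (x ∈ s ↔ x ∈ t)) : s =ᵐ[ν] t := by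
  have hae : ∀ᵐ x ∂ν, x ∈ E := by
    rw [ae_iff]
    exact hE
  filter_upwards [hae] with x hx
  exact eq_iff_iff.2 (h x hx)

lemma nullm_of_restrict {α : Type*} [MeasurableSpace α] {ν : Measure α} {B t : Set α}
    (ht : MeasurableSet t) (hB : B ⊆ t) (h : NullMeasurableSet B (ν.restrict t)) :
    NullMeasurableSet B ν := by
  obtain ⟨M, hMsub, hM, hae⟩ := h.exists_measurable_subset_ae_eq
  -- hM : MeasurableSet M, hae : M =ᵐ[ν.restrict t] B
  have h1 : (ν.restrict t) ((M \ B) ∪ (B \ M)) = 0 := by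
    rw [measure_union_null_iff]
    constructor
    · exact ae_le_set.1 hae.le
    · exact ae_le_set.1 hae.symm.le
  rw [Measure.restrict_apply' ht] at h1
  have h2 : ν (B \ (M ∩ t)) = 0 := by
    refine measure_mono_null (fun x hx => ?_) h1
    obtain ⟨hxB, hxM⟩ := hx
    have hxt : x ∈ t := hB hxB
    constructor
    · right
      exact ⟨hxB, fun hxM' => hxM ⟨hxM', hxt⟩⟩
    · exact hxt
  have h3 : ν ((M ∩ t) \ B) = 0 := by
    refine measure_mono_null (fun x hx => ?_) h1
    exact ⟨Or.inl ⟨hx.1.1, hx.2⟩, hx.1.2⟩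
  refine ((hM.inter ht).nullMeasurableSet).congr ?_
  rw [ae_eq_set]
  exact ⟨h3, h2⟩

lemma SS_compl {μ : Measure (ℕ → Bool)} (hμ : IsCoinMeasure μ)
    {μ₂ : Measure ((ℕ → Bool) × (ℕ → Bool))} (hμ₂ : IsCoinMeasure2 μ₂) :
    μ₂ ((S ×ˢ S)ᶜ) = 0 := by
  haveI := isProb_of_coin hμ
  rw [coin2_eq_prod hμ hμ₂]
  have hsub : (S ×ˢ S)ᶜ ⊆ (Sᶜ ×ˢ univ) ∪ (univ ×ˢ Sᶜ) := by
    intro z hz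
    rw [mem_compl_iff, mem_prod] at hz
    push_neg at hz
    by_cases h1 : z.1 ∈ S
    · exact Or.inr ⟨trivial, hz h1⟩
    · exact Or.inl ⟨h1, trivial⟩
  refine measure_mono_null hsub (measure_union_null ?_ ?_)
  · rw [Measure.prod_prod, mu_S_compl hμ, zero_mul]
  · rw [Measure.prod_prod, mu_S_compl hμ, mul_zero]

lemma lamIco_compl : lam0 ((Ico (0:ℝ) 1)ᶜ) = 0 := by
  rw [lam0, Measure.restrict_apply' measurableSet_Ico]
  simp

lemma goodsq_compl : (lam0.prod lam0) ((((Ico (0:ℝ) 1) ∩ hR ⁻¹' S) ×ˢ ((Ico (0:ℝ) 1) ∩ hR ⁻¹' S))ᶜ) = 0 := by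
  have hbad : lam0 (((Ico (0:ℝ) 1) ∩ hR ⁻¹' S)ᶜ) = 0 := by
    rw [compl_inter]
    refine measure_union_null lamIco_compl ?_
    have : hR ⁻¹' S ᶜ = hR ⁻¹' Sᶜ := rfl
    rw [← Set.preimage_compl, ← Measure.map_apply hR_measurable measurableSet_S.compl]
    exact mu_S_compl coin_map
  have hsub : ((((Ico (0:ℝ) 1) ∩ hR ⁻¹' S) ×ˢ ((Ico (0:ℝ) 1) ∩ hR ⁻¹' S))ᶜ)
      ⊆ ((((Ico (0:ℝ) 1) ∩ hR ⁻¹' S)ᶜ) ×ˢ univ) ∪ (univ ×ˢ (((Ico (0:ℝ) 1) ∩ hR ⁻¹' S)ᶜ)) := by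
    intro z hz
    rw [mem_compl_iff, mem_prod] at hz
    push_neg at hz
    by_cases h1 : z.1 ∈ (Ico (0:ℝ) 1) ∩ hR ⁻¹' S
    · exact Or.inr ⟨trivial, hz h1⟩
    · exact Or.inl ⟨h1, trivial⟩
  refine measure_mono_null hsub (measure_union_null ?_ ?_)
  · rw [Measure.prod_prod, hbad, zero_mul]
  · rw [Measure.prod_prod, hbad, mul_zero]

lemma localize {A : Set (ℝ × ℝ)} (hA : ¬ NullMeasurableSet A volume) :
    ∃ m n : ℤ, ¬ NullMeasurableSet
      (A ∩ (Ico (m:ℝ) (m+1) ×ˢ Ico (n:ℝ) (n+1))) volume := by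
  by_contra h
  push_neg at h
  apply hA
  have hcover : A = ⋃ p : ℤ × ℤ,
      A ∩ (Ico ((p.1:ℝ)) (p.1+1) ×ˢ Ico ((p.2:ℝ)) (p.2+1)) := by
    ext z
    simp only [mem_iUnion, mem_inter_iff, mem_prod, mem_Ico]
    constructor
    · intro hz
      exact ⟨(⌊z.1⌋, ⌊z.2⌋), hz,
        ⟨⟨Int.floor_le _, by push_cast; exact Int.lt_floor_add_one _⟩,
         ⟨Int.floor_le _, by push_cast; exact Int.lt_floor_add_one _⟩⟩⟩
    · rintro ⟨p, hz, _⟩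
      exact hz
  rw [hcover]
  exact NullMeasurableSet.iUnion fun p => h p.1 p.2

lemma ggh_eq {v : ℝ} (hv : v ∈ Ico (0:ℝ) 1) (hS : hR v ∈ S) : gg (hR v) = v :=
  hR_injOn (gg_mem_Ico _) hv (hR_gg hS)

end CoinAux

/-- condition (2) (for the plane with Lebesgue measure) is equivalent to
condition (3) (for the Cantor space `2^ℕ` with the coin-flipping measure). -/
theorem plane_graph_condition_iff_cantor_graph_condition
    (μ : Measure (ℕ → Bool)) (hμ : IsCoinMeasure μ)
    (μ₂ : Measure ((ℕ → Bool) × (ℕ → Bool))) (hμ₂ : IsCoinMeasure2 μ₂) :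
    (∀ A : Set (ℝ × ℝ), ¬ NullMeasurableSet A volume →
      ∃ f : ℝ → ℝ, Measurable f ∧
        ¬ NullMeasurableSet {x : ℝ | (x, f x) ∈ A} volume) ↔
    (∀ A : Set ((ℕ → Bool) × (ℕ → Bool)), ¬ NullMeasurableSet A μ₂ →
      ∃ f : (ℕ → Bool) → (ℕ → Bool), Measurable f ∧
        ¬ NullMeasurableSet {x : ℕ → Bool | (x, f x) ∈ A} μ) := by
  constructor
  · -- plane condition implies Cantor condition
    intro H2 A hA
    haveI := CoinAux.isProb_of_coin hμ
    set A' := (Prod.map CoinAux.hR CoinAux.hR) ⁻¹' A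
      ∩ (Set.Ico (0:ℝ) 1 ×ˢ Set.Ico (0:ℝ) 1) with hA'def
    have hA' : ¬ NullMeasurableSet A' volume := by
      intro hm
      apply hA
      have h1 : NullMeasurableSet ((Prod.map CoinAux.gg CoinAux.gg) ⁻¹' A') μ₂ :=
        hm.preimage (CoinAux.qmp_gg2 hμ hμ₂)
      refine h1.congr (CoinAux.ae_set_eq (CoinAux.SS_compl hμ hμ₂) ?_)
      rintro ⟨x, y⟩ ⟨hx, hy⟩
      simp only [hA'def, Set.mem_preimage, Set.mem_inter_iff, Set.mem_prod, Prod.map_apply]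
      rw [CoinAux.hR_gg hx, CoinAux.hR_gg hy]
      constructor
      · rintro ⟨hmem, -⟩
        exact hmem
      · intro hmem
        exact ⟨hmem, CoinAux.gg_mem_Ico x, CoinAux.gg_mem_Ico y⟩
    obtain ⟨f, hf, hB⟩ := H2 A' hA'
    refine ⟨fun x => CoinAux.hR (f (CoinAux.gg x)),
      CoinAux.hR_measurable.comp (hf.comp CoinAux.gg_measurable), ?_⟩
    intro hE
    apply hB
    have hBsub : {u : ℝ | (u, f u) ∈ A'} ⊆ Set.Ico (0:ℝ) 1 := fun u hu => hu.2.1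
    have hG : MeasurableSet {x : ℕ → Bool | f (CoinAux.gg x) ∈ Set.Ico (0:ℝ) 1} :=
      (hf.comp CoinAux.gg_measurable) measurableSet_Ico
    have hEG : NullMeasurableSet
        ({x : ℕ → Bool | (x, CoinAux.hR (f (CoinAux.gg x))) ∈ A}
          ∩ {x | f (CoinAux.gg x) ∈ Set.Ico (0:ℝ) 1}) μ := hE.inter hG.nullMeasurableSet
    have hpre : NullMeasurableSet (CoinAux.gg ⁻¹' {u : ℝ | (u, f u) ∈ A'}) μ := by
      refine hEG.congr (CoinAux.ae_set_eq (CoinAux.mu_S_compl hμ) fun x hx => ?_)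
      simp only [Set.mem_inter_iff, Set.mem_setOf_eq, Set.mem_preimage, hA'def, Set.mem_prod,
        Prod.map_apply]
      rw [CoinAux.hR_gg hx]
      constructor
      · rintro ⟨hxA, hxG⟩
        exact ⟨hxA, CoinAux.gg_mem_Ico _, hxG⟩
      · rintro ⟨hxA, _, hxG⟩
        exact ⟨hxA, hxG⟩
    have h2 : NullMeasurableSet (CoinAux.hR ⁻¹' (CoinAux.gg ⁻¹' {u : ℝ | (u, f u) ∈ A'}))
        CoinAux.lam0 := hpre.preimage (CoinAux.qmp_hR hμ)
    have haeB : (CoinAux.hR ⁻¹' (CoinAux.gg ⁻¹' {u : ℝ | (u, f u) ∈ A'}))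
        =ᵐ[CoinAux.lam0] {u : ℝ | (u, f u) ∈ A'} := by
      filter_upwards [CoinAux.ae_gghR] with v hv
      refine eq_iff_iff.2 ?_
      show v ∈ CoinAux.hR ⁻¹' (CoinAux.gg ⁻¹' {u : ℝ | (u, f u) ∈ A'})
        ↔ v ∈ {u : ℝ | (u, f u) ∈ A'}
      rw [Set.mem_preimage, Set.mem_preimage, hv]
    exact CoinAux.nullm_of_restrict measurableSet_Ico hBsub (h2.congr haeB)
  · -- Cantor condition implies plane condition
    intro H3 A hA
    haveI := CoinAux.isProb_of_coin hμ
    obtain ⟨m, n, hsq⟩ := CoinAux.localize hA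
    set τ : ℝ × ℝ → ℝ × ℝ := Prod.map (· + (m:ℝ)) (· + (n:ℝ)) with hτ
    have hmpτ : MeasurePreserving τ (volume : Measure (ℝ × ℝ)) volume := by
      have h := (measurePreserving_add_right (volume : Measure ℝ) (m:ℝ)).prod
        (measurePreserving_add_right (volume : Measure ℝ) (n:ℝ))
      rw [← Measure.volume_eq_prod] at h
      exact h
    set τ' : ℝ × ℝ → ℝ × ℝ := Prod.map (· + (-(m:ℝ))) (· + (-(n:ℝ))) with hτ'
    have hmpτ' : MeasurePreserving τ' (volume : Measure (ℝ × ℝ)) volume := by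
      have h := (measurePreserving_add_right (volume : Measure ℝ) (-(m:ℝ))).prod
        (measurePreserving_add_right (volume : Measure ℝ) (-(n:ℝ)))
      rw [← Measure.volume_eq_prod] at h
      exact h
    set Asq := A ∩ (Set.Ico (m:ℝ) (m+1) ×ˢ Set.Ico (n:ℝ) (n+1)) with hAsq
    set At := τ ⁻¹' Asq with hAtdef
    have hAt : ¬ NullMeasurableSet At volume := by
      intro hm'
      apply hsq
      have hAsqeq : Asq = τ' ⁻¹' At := by
        ext ⟨a, b⟩
        simp only [hAtdef, Set.mem_preimage, hτ, hτ', Prod.map_apply]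
        have e1 : a + -(m:ℝ) + m = a := by ring
        have e2 : b + -(n:ℝ) + n = b := by ring
        rw [e1, e2]
      rw [hAsqeq]
      exact hm'.preimage hmpτ'.quasiMeasurePreserving
    have hAtsub : At ⊆ Set.Ico (0:ℝ) 1 ×ˢ Set.Ico (0:ℝ) 1 := by
      rintro ⟨u, v⟩ h
      obtain ⟨-, ⟨hu1, hu2⟩, hv1, hv2⟩ := h
      simp only [hτ, Prod.map_apply] at hu1 hu2 hv1 hv2
      exact ⟨⟨by linarith, by linarith⟩, ⟨by linarith, by linarith⟩⟩
    set Ah := (Prod.map CoinAux.gg CoinAux.gg) ⁻¹' At with hAhdef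
    have hAh : ¬ NullMeasurableSet Ah μ₂ := by
      intro hm'
      apply hAt
      have h1 : NullMeasurableSet ((Prod.map CoinAux.hR CoinAux.hR) ⁻¹' Ah)
          ((volume : Measure (ℝ × ℝ)).restrict (Set.Ico (0:ℝ) 1 ×ˢ Set.Ico (0:ℝ) 1)) :=
        hm'.preimage (CoinAux.qmp_hR2 hμ hμ₂)
      have hae2 : ((Prod.map CoinAux.hR CoinAux.hR) ⁻¹' Ah)
          =ᵐ[(volume : Measure (ℝ × ℝ)).restrict (Set.Ico (0:ℝ) 1 ×ˢ Set.Ico (0:ℝ) 1)] At := by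
        rw [CoinAux.restrict_sq]
        refine CoinAux.ae_set_eq CoinAux.goodsq_compl ?_
        rintro ⟨u, v⟩ ⟨⟨hu, huS⟩, hv, hvS⟩
        simp only [hAhdef, Set.mem_preimage, Prod.map_apply]
        rw [CoinAux.ggh_eq hu huS, CoinAux.ggh_eq hv hvS]
      exact CoinAux.nullm_of_restrict (measurableSet_Ico.prod measurableSet_Ico) hAtsub
        (h1.congr hae2)
    obtain ⟨F, hF, hE⟩ := H3 Ah hAh
    refine ⟨fun u => CoinAux.gg (F (CoinAux.hR (u - (m:ℝ)))) + (n:ℝ),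
      (CoinAux.gg_measurable.comp (hF.comp
        (CoinAux.hR_measurable.comp (measurable_id.sub_const _)))).add_const _, ?_⟩
    intro hE'
    apply hE
    set B := (fun v : ℝ => v + (m:ℝ)) ⁻¹'
      ({u : ℝ | (u, CoinAux.gg (F (CoinAux.hR (u - (m:ℝ)))) + (n:ℝ)) ∈ A}
        ∩ Set.Ico (m:ℝ) (m+1)) with hBdef
    have hBnm : NullMeasurableSet B volume :=
      (hE'.inter measurableSet_Ico.nullMeasurableSet).preimage
        (measurePreserving_add_right volume (m:ℝ)).quasiMeasurePreserving
    have hBeq : B = {v : ℝ | (v, CoinAux.gg (F (CoinAux.hR v))) ∈ At} := by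
      ext v
      have hw := CoinAux.gg_mem_Ico (F (CoinAux.hR v))
      simp only [hBdef, Set.mem_preimage, Set.mem_inter_iff, Set.mem_setOf_eq, hAtdef, hτ,
        Prod.map_apply, hAsq, Set.mem_prod, Set.mem_Ico, add_sub_cancel_right]
      simp only [Set.mem_Ico] at hw
      constructor
      · rintro ⟨hvA, hvI⟩
        exact ⟨hvA, hvI, by constructor <;> [linarith [hw.1]; linarith [hw.2]]⟩
      · rintro ⟨hvA, hvI, -⟩
        exact ⟨hvA, hvI⟩
    have hpre : NullMeasurableSet (CoinAux.gg ⁻¹' B) μ := hBnm.preimage (CoinAux.qmp_gg hμ)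
    refine hpre.congr (CoinAux.ae_set_eq (CoinAux.mu_S_compl hμ) fun x hx => ?_)
    rw [hBeq]
    simp only [Set.mem_preimage, Set.mem_setOf_eq, hAhdef, Prod.map_apply]
    rw [CoinAux.hR_gg hx]
end

section
/- Assume: (a) for every non-measurable set A ⊆ 2^ℕ × 2^ℕ there exists a Borel function f : 2^ℕ → 2^ℕ such that {x ∈ 2^ℕ : (x, f(x)) ∈ A} is not measurable; and (b) for every function f* : 2^ℕ → 2^ℕ there are a set A ⊆ 2^ℕ, a function f₁ : A → 2^ℕ whose graph {(x, f₁(x)) : x ∈ A} ⊆ 2^ℕ × 2^ℕ has positive outer measure, and a Borel function f₂ : 2^ℕ × 2^ℕ → 2^ℕ such that f*(x) = f₂(x, f₁(x)) for all x ∈ A. Then for every function f : ℝ → ℝ there is a continuous function g : ℝ → ℝ such that the set {x ∈ ℝ : f(x) = g(x)} has positive outer Lebesgue measure. -/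
open MeasureTheory

theorem coin_univ {I : Type*} {μ : Measure (I → Bool)} (hμ : IsCoinMeasure μ) :
    μ Set.univ = 1 := by
  have := hμ ∅ (fun _ => true)
  simpa using this

theorem coin_prob {μ : Measure (ℕ → Bool)} (hμ : IsCoinMeasure μ) :
    IsProbabilityMeasure μ := ⟨coin_univ hμ⟩

theorem coin_singleton {μ : Measure (ℕ → Bool)} (hμ : IsCoinMeasure μ) (y : ℕ → Bool) :
    μ {y} = 0 := by
  by_contra h
  obtain ⟨n, hn⟩ := ENNReal.exists_inv_two_pow_lt h
  have hle : μ {y} ≤ (2 : ENNReal)⁻¹ ^ n := by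
    have := hμ (Finset.range n) y
    rw [Finset.card_range] at this
    rw [← this]
    exact measure_mono (by rintro z rfl; intro i _; rfl)
  exact absurd (hle.trans_lt hn) (lt_irrefl _)

theorem coin_noAtoms {μ : Measure (ℕ → Bool)} (hμ : IsCoinMeasure μ) : NoAtoms μ :=
  ⟨coin_singleton hμ⟩

/-- The set of eventually-true sequences. -/
def Etail : Set (ℕ → Bool) := {y | ∃ N, ∀ i, N ≤ i → y i = true}

theorem Etail_countable : Etail.Countable := by
  have : Etail = ⋃ N : ℕ, {y : ℕ → Bool | ∀ i, N ≤ i → y i = true} := by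
    ext y; simp [Etail]
  rw [this]
  refine Set.countable_iUnion fun N => Set.Finite.countable ?_
  have hsub : {y : ℕ → Bool | ∀ i, N ≤ i → y i = true} ⊆
      (fun w : Fin N → Bool => fun i => if h : i < N then w ⟨i, h⟩ else true) '' Set.univ := by
    intro y hy
    refine ⟨fun j => y j, trivial, ?_⟩
    funext i
    by_cases h : i < N
    · simp [h]
    · simp only [dif_neg h]
      exact (hy i (not_lt.mp h)).symm
  exact Set.Finite.subset (Set.Finite.image _ (Set.finite_univ)) hsub

theorem coin_Etail_null {μ : Measure (ℕ → Bool)} (hμ : IsCoinMeasure μ) : μ Etail = 0 := by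
  haveI : NullSingletonClass μ := coin_noAtoms hμ
  exact Etail_countable.measure_zero μ

open Finset Set

def Nval (y : ℕ → Bool) : ℕ → ℕ
  | 0 => 0
  | n + 1 => 2 * Nval y n + (y n).toNat

noncomputable def gdig (y : ℕ → Bool) (i : ℕ) : ℝ := ((y i).toNat : ℝ) * (2:ℝ)⁻¹ ^ (i+1)

theorem gdig_nonneg (y : ℕ → Bool) (i : ℕ) : 0 ≤ gdig y i := by
  unfold gdig; positivity

theorem gdig_le (y : ℕ → Bool) (i : ℕ) : gdig y i ≤ (2:ℝ)⁻¹ ^ (i+1) := by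
  unfold gdig
  have : ((y i).toNat : ℝ) ≤ 1 := by cases y i <;> norm_num
  nlinarith [pow_pos (by norm_num : (0:ℝ) < 2⁻¹) (i+1)]

theorem summable_geo_succ : Summable (fun i : ℕ => (2:ℝ)⁻¹ ^ (i+1)) := by
  have h : Summable (fun i : ℕ => (2:ℝ)⁻¹ ^ i) :=
    summable_geometric_of_lt_one (by norm_num) (by norm_num)
  simpa [pow_succ'] using h.mul_left (2:ℝ)⁻¹

theorem summable_gdig (y : ℕ → Bool) : Summable (gdig y) :=
  Summable.of_nonneg_of_le (gdig_nonneg y) (gdig_le y) summable_geo_succ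

noncomputable def dmap (y : ℕ → Bool) : ℝ := ∑' i, gdig y i

noncomputable def Dfin (y : ℕ → Bool) (n : ℕ) : ℝ := ∑ i ∈ range n, gdig y i

noncomputable def dtail (y : ℕ → Bool) (n : ℕ) : ℝ := ∑' i, gdig y (i + n)

theorem dmap_eq (y : ℕ → Bool) (n : ℕ) : dmap y = Dfin y n + dtail y n :=
  (Summable.sum_add_tsum_nat_add n (summable_gdig y)).symm

theorem Dfin_eq (y : ℕ → Bool) (n : ℕ) : Dfin y n = (Nval y n : ℝ) * (2:ℝ)⁻¹ ^ n := by
  induction n with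
  | zero => simp [Dfin, Nval]
  | succ n ih =>
    rw [Dfin, Finset.sum_range_succ, ← Dfin, ih]
    show _ = ((2 * Nval y n + (y n).toNat : ℕ) : ℝ) * _
    push_cast
    unfold gdig
    ring

theorem tsum_geo_shift (n : ℕ) : ∑' i : ℕ, (2:ℝ)⁻¹ ^ (i + n + 1) = (2:ℝ)⁻¹ ^ n := by
  have h1 : (fun i : ℕ => (2:ℝ)⁻¹ ^ (i + n + 1)) = fun i : ℕ => (2:ℝ)⁻¹ ^ (n+1) * (2:ℝ)⁻¹ ^ i := by
    funext i
    rw [← pow_add]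
    ring_nf
  rw [h1, tsum_mul_left, tsum_geometric_of_lt_one (by norm_num) (by norm_num)]
  rw [show (1 - (2:ℝ)⁻¹)⁻¹ = 2 by norm_num, pow_succ]
  ring

theorem summable_geo_shift (n : ℕ) : Summable (fun i : ℕ => (2:ℝ)⁻¹ ^ (i + n + 1)) := by
  have h : Summable (fun i : ℕ => (2:ℝ)⁻¹ ^ i) :=
    summable_geometric_of_lt_one (by norm_num) (by norm_num)
  have := (h.mul_left ((2:ℝ)⁻¹ ^ (n+1)))
  refine this.congr fun i => ?_
  rw [← pow_add]; ring_nf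

theorem dtail_nonneg (y : ℕ → Bool) (n : ℕ) : 0 ≤ dtail y n :=
  tsum_nonneg fun i => gdig_nonneg y _

theorem dtail_le (y : ℕ → Bool) (n : ℕ) : dtail y n ≤ (2:ℝ)⁻¹ ^ n := by
  refine le_trans (Summable.tsum_le_tsum (fun i => gdig_le y (i + n))
    ((summable_gdig y).comp_injective (add_left_injective n)) (summable_geo_shift n)) ?_
  exact le_of_eq (tsum_geo_shift n)

theorem dtail_lt (y : ℕ → Bool) (n j : ℕ) (hj : y (j + n) = false) :
    dtail y n < (2:ℝ)⁻¹ ^ n := by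
  have h := Summable.tsum_lt_tsum_of_nonneg (i := j)
    (fun b => gdig_nonneg y (b + n)) (fun b => gdig_le y (b + n))
    (by simp [gdig, hj]) (summable_geo_shift n)
  calc dtail y n < ∑' i : ℕ, (2:ℝ)⁻¹ ^ (i + n + 1) := h
    _ = (2:ℝ)⁻¹ ^ n := tsum_geo_shift n

theorem dmap_nonneg (y : ℕ → Bool) : 0 ≤ dmap y :=
  tsum_nonneg fun i => gdig_nonneg y i

theorem dmap_le_one (y : ℕ → Bool) : dmap y ≤ 1 := by
  have := dtail_le y 0
  have h0 := dmap_eq y 0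
  simp [Dfin] at h0
  simpa [h0] using this

theorem dmap_mem_Icc (y : ℕ → Bool) (n : ℕ) :
    dmap y ∈ Icc ((Nval y n : ℝ) * (2:ℝ)⁻¹ ^ n) ((Nval y n : ℝ) * (2:ℝ)⁻¹ ^ n + (2:ℝ)⁻¹ ^ n) := by
  rw [dmap_eq y n, Dfin_eq]
  constructor
  · linarith [dtail_nonneg y n]
  · linarith [dtail_le y n]


theorem notE_false (y : ℕ → Bool) (hy : y ∉ Etail) (n : ℕ) : ∃ j, y (j + n) = false := by
  simp only [Etail, Set.mem_setOf_eq, not_exists] at hy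
  have := hy n
  push_neg at this
  obtain ⟨i, hi, hfalse⟩ := this
  exact ⟨i - n, by rw [Nat.sub_add_cancel hi]; simpa using hfalse⟩

theorem dmap_mem_Ico (y : ℕ → Bool) (hy : y ∉ Etail) (n : ℕ) :
    dmap y ∈ Ico ((Nval y n : ℝ) * (2:ℝ)⁻¹ ^ n) (((Nval y n : ℝ) + 1) * (2:ℝ)⁻¹ ^ n) := by
  obtain ⟨j, hj⟩ := notE_false y hy n
  rw [dmap_eq y n, Dfin_eq]
  constructor
  · linarith [dtail_nonneg y n]
  · have := dtail_lt y n j hj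
    nlinarith [pow_pos (by norm_num : (0:ℝ) < 2⁻¹) n]



theorem Nval_lt (y : ℕ → Bool) (n : ℕ) : Nval y n < 2 ^ n := by
  induction n with
  | zero => simp [Nval]
  | succ n ih =>
    have : (y n).toNat ≤ 1 := Bool.toNat_le _
    simp only [Nval, pow_succ]
    omega

theorem Nval_congr {y z : ℕ → Bool} {n : ℕ} (h : ∀ i < n, y i = z i) :
    Nval y n = Nval z n := by
  induction n with
  | zero => rfl
  | succ n ih =>
    simp only [Nval, ih (fun i hi => h i (by omega)), h n (by omega)]

theorem Nval_inj {y z : ℕ → Bool} {n : ℕ} (h : Nval y n = Nval z n) :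
    ∀ i < n, y i = z i := by
  induction n with
  | zero => omega
  | succ n ih =>
    simp only [Nval] at h
    have h1 : (y n).toNat ≤ 1 := Bool.toNat_le _
    have h2 : (z n).toNat ≤ 1 := Bool.toNat_le _
    have heq : Nval y n = Nval z n ∧ (y n).toNat = (z n).toNat := by omega
    intro i hi
    rcases Nat.lt_succ_iff_lt_or_eq.mp hi with hi' | rfl
    · exact ih heq.1 i hi'
    · have := heq.2
      cases hy : y i <;> cases hz : z i <;> simp_all
  
theorem Nval_surj (n : ℕ) (K : ℕ) (hK : K < 2 ^ n) : ∃ y, Nval y n = K := by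
  induction n generalizing K with
  | zero =>
    have : K = 0 := by simpa using Nat.lt_one_iff.mp (by simpa using hK)
    exact ⟨fun _ => true, by simp [Nval, this]⟩
  | succ n ih =>
    obtain ⟨y, hy⟩ := ih (K / 2) (by rw [pow_succ] at hK; omega)
    refine ⟨fun i => if i = n then decide (K % 2 = 1) else y i, ?_⟩
    have h1 : Nval (fun i => if i = n then decide (K % 2 = 1) else y i) n = Nval y n :=
      Nval_congr (fun i hi => by simp [Nat.ne_of_lt hi, hi.ne])
    simp only [Nval, h1, hy, if_pos rfl]
    rcases Nat.mod_two_eq_zero_or_one K with h | h <;> simp [h] <;> omega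

theorem continuous_dmap : Continuous dmap := by
  apply continuous_tsum (u := fun i => (2:ℝ)⁻¹ ^ (i+1))
  · intro i
    have h1 : Continuous fun y : ℕ → Bool => y i := continuous_apply i
    have h2 : Continuous fun b : Bool => ((b.toNat : ℝ) * (2:ℝ)⁻¹ ^ (i+1)) :=
      continuous_of_discreteTopology
    exact h2.comp h1
  · exact summable_geo_succ
  · intro i y
    rw [Real.norm_eq_abs, abs_of_nonneg (gdig_nonneg y i)]
    exact gdig_le y i

theorem measurable_dmap : Measurable dmap := continuous_dmap.measurable

noncomputable def emap (x : ℝ) (i : ℕ) : Bool := decide (⌊x * 2 ^ (i+1)⌋ % 2 = 1)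

theorem measurable_emap : Measurable emap := by
  refine measurable_pi_lambda _ fun i => ?_
  have h1 : Measurable fun x : ℝ => ⌊x * 2 ^ (i+1)⌋ :=
    Int.measurable_floor.comp (measurable_id.mul_const _)
  exact (measurable_from_top (f := fun k : ℤ => decide (k % 2 = 1))).comp h1

theorem floor_dmap (y : ℕ → Bool) (hy : y ∉ Etail) (n : ℕ) :
    ⌊dmap y * 2 ^ n⌋ = (Nval y n : ℤ) := by
  obtain ⟨hlo, hhi⟩ := dmap_mem_Ico y hy n
  have hp : (0:ℝ) < 2 ^ n := by positivity
  have hinv : (2:ℝ)⁻¹ ^ n * 2 ^ n = 1 := by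
    rw [← mul_pow]; norm_num
  rw [Int.floor_eq_iff]
  push_cast
  constructor
  · calc (Nval y n : ℝ) = (Nval y n : ℝ) * (2⁻¹ ^ n * 2 ^ n) := by rw [hinv]; ring
      _ = ((Nval y n : ℝ) * 2⁻¹ ^ n) * 2 ^ n := by ring
      _ ≤ dmap y * 2 ^ n := by nlinarith
  · calc dmap y * 2 ^ n < (((Nval y n : ℝ) + 1) * 2⁻¹ ^ n) * 2 ^ n := by nlinarith
      _ = ((Nval y n : ℝ) + 1) * (2⁻¹ ^ n * 2 ^ n) := by ring
      _ = (Nval y n : ℝ) + 1 := by rw [hinv]; ring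

theorem emap_dmap (y : ℕ → Bool) (hy : y ∉ Etail) : emap (dmap y) = y := by
  funext i
  unfold emap
  rw [floor_dmap y hy (i+1)]
  have : Nval y (i+1) = 2 * Nval y i + (y i).toNat := rfl
  rw [this]
  cases h : y i <;> simp [h] <;> omega

theorem Nval_emap (x : ℝ) (hx : x ∈ Ico (0:ℝ) 1) (n : ℕ) :
    (Nval (emap x) n : ℤ) = ⌊x * 2 ^ n⌋ := by
  induction n with
  | zero =>
    simp only [Nval, pow_zero, mul_one, Nat.cast_zero]
    rw [eq_comm, Int.floor_eq_zero_iff]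
    exact hx
  | succ n ih =>
    set t := ⌊x * 2 ^ (n+1)⌋ with ht
    have hx0 : (0:ℝ) ≤ x := hx.1
    have htnn : 0 ≤ t := Int.floor_nonneg.mpr (by positivity)
    have hqr : t = 2 * (t / 2) + t % 2 ∧ 0 ≤ t % 2 ∧ t % 2 < 2 := by omega
    set q := t / 2 with hq
    set r := t % 2 with hr
    have hfl : (t:ℝ) ≤ x * 2 ^ (n+1) ∧ x * 2 ^ (n+1) < t + 1 :=
      ⟨Int.floor_le _, Int.lt_floor_add_one _⟩
    have hq2 : ⌊x * 2 ^ n⌋ = q := by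
      rw [Int.floor_eq_iff]
      have h2 : x * 2 ^ (n+1) = x * 2 ^ n * 2 := by ring
      have hcast : (t:ℝ) = 2 * q + r := by exact_mod_cast congrArg (Int.cast : ℤ → ℝ) hqr.1
      have hr0 : (0:ℝ) ≤ (r:ℝ) := by exact_mod_cast hqr.2.1
      have hr1 : (r:ℝ) ≤ 1 := by exact_mod_cast (by omega : r ≤ 1)
      constructor
      · nlinarith [hfl.1]
      · nlinarith [hfl.2]
    have hdig : ((emap x n).toNat : ℤ) = r := by
      have : emap x n = decide (r = 1) := by
        unfold emap; rw [← ht, ← hr]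
      rw [this]
      rcases (by omega : r = 0 ∨ r = 1) with h | h <;> simp [h]
    show ((2 * Nval (emap x) n + (emap x n).toNat : ℕ) : ℤ) = t
    push_cast
    rw [ih, hq2]
    omega

theorem dmap_emap (x : ℝ) (hx : x ∈ Ico (0:ℝ) 1) : dmap (emap x) = x := by
  have hDfin : ∀ n, x - (2:ℝ)⁻¹ ^ n ≤ Dfin (emap x) n ∧ Dfin (emap x) n ≤ x := by
    intro n
    have hN := Nval_emap x hx n
    have hfl : (⌊x * 2 ^ n⌋ : ℝ) ≤ x * 2 ^ n := Int.floor_le _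
    have hfl2 : x * 2 ^ n < ⌊x * 2 ^ n⌋ + 1 := Int.lt_floor_add_one _
    have hNc : ((Nval (emap x) n : ℝ)) = ((⌊x * 2 ^ n⌋ : ℤ) : ℝ) := by exact_mod_cast hN
    have hp : (0:ℝ) < 2 ^ n := by positivity
    have hinv : (2:ℝ)⁻¹ ^ n * 2 ^ n = 1 := by rw [← mul_pow]; norm_num
    rw [Dfin_eq, hNc]
    constructor
    · have : x * 2 ^ n - 1 < (⌊x * 2 ^ n⌋ : ℝ) := by linarith
      have h2 : (x - (2:ℝ)⁻¹ ^ n) * 2 ^ n ≤ (⌊x * 2 ^ n⌋ : ℝ) := by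
        calc (x - (2:ℝ)⁻¹ ^ n) * 2 ^ n = x * 2 ^ n - 2⁻¹ ^ n * 2 ^ n := by ring
          _ = x * 2 ^ n - 1 := by rw [hinv]
          _ ≤ (⌊x * 2 ^ n⌋ : ℝ) := by linarith
      calc x - (2:ℝ)⁻¹ ^ n = ((x - (2:ℝ)⁻¹ ^ n) * 2 ^ n) * (2:ℝ)⁻¹ ^ n := by
            rw [mul_comm ((2:ℝ)⁻¹ ^ n) (2 ^ n)] at hinv
            rw [mul_assoc, hinv, mul_one]
        _ ≤ (⌊x * 2 ^ n⌋ : ℝ) * (2:ℝ)⁻¹ ^ n := by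
            apply mul_le_mul_of_nonneg_right h2 (by positivity)
    · calc (⌊x * 2 ^ n⌋ : ℝ) * (2:ℝ)⁻¹ ^ n ≤ (x * 2 ^ n) * (2:ℝ)⁻¹ ^ n := by
            apply mul_le_mul_of_nonneg_right hfl (by positivity)
        _ = x * (2 ^ n * (2:ℝ)⁻¹ ^ n) := by ring
        _ = x := by rw [mul_comm ((2:ℝ)^n)] at *; rw [hinv, mul_one]
  have hlim1 : Filter.Tendsto (fun n => Dfin (emap x) n) Filter.atTop (nhds x) := by
    have hlo : Filter.Tendsto (fun n : ℕ => x - (2:ℝ)⁻¹ ^ n) Filter.atTop (nhds x) := by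
      have : Filter.Tendsto (fun n : ℕ => (2:ℝ)⁻¹ ^ n) Filter.atTop (nhds 0) :=
        tendsto_pow_atTop_nhds_zero_of_lt_one (by norm_num) (by norm_num)
      simpa using (tendsto_const_nhds (x := x)).sub this
    exact tendsto_of_tendsto_of_tendsto_of_le_of_le hlo tendsto_const_nhds
      (fun n => (hDfin n).1) (fun n => (hDfin n).2)
  have hlim2 : Filter.Tendsto (fun n => Dfin (emap x) n) Filter.atTop (nhds (dmap (emap x))) :=
    (summable_gdig (emap x)).hasSum.tendsto_sum_nat
  exact tendsto_nhds_unique hlim2 hlim1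

theorem dmap_lt_one (y : ℕ → Bool) (hy : y ∉ Etail) : dmap y < 1 := by
  have h := (dmap_mem_Ico y hy 0).2
  simpa [Nval] using h

theorem dmap_mem_dyadic_iff (y : ℕ → Bool) (hy : y ∉ Etail) (n K : ℕ) :
    dmap y ∈ Ico ((K:ℝ) * (2:ℝ)⁻¹ ^ n) (((K:ℝ) + 1) * (2:ℝ)⁻¹ ^ n) ↔ Nval y n = K := by
  have hmem := dmap_mem_Ico y hy n
  have hp : (0:ℝ) < (2:ℝ)⁻¹ ^ n := by positivity
  constructor
  · rintro ⟨h1, h2⟩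
    have e1 : (Nval y n : ℝ) < (K:ℝ) + 1 := by nlinarith [hmem.1, hmem.2]
    have e2 : (K:ℝ) < (Nval y n : ℝ) + 1 := by nlinarith [hmem.1, hmem.2]
    have : Nval y n < K + 1 := by exact_mod_cast e1
    have : K < Nval y n + 1 := by exact_mod_cast e2
    omega
  · rintro rfl
    exact hmem

def dyIco (n : ℕ) (k : ℤ) : Set ℝ :=
  Ico ((k:ℝ) * (2:ℝ)⁻¹ ^ n) (((k:ℝ) + 1) * (2:ℝ)⁻¹ ^ n)

def dySystem : Set (Set ℝ) := {s | ∃ n : ℕ, ∃ k : ℤ, s = dyIco n k}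

theorem dyIco_subset_of_le {n m : ℕ} {j k : ℤ} (hnm : n ≤ m)
    (hne : (dyIco n j ∩ dyIco m k).Nonempty) : dyIco m k ⊆ dyIco n j := by
  obtain ⟨x, ⟨hx1, hx2⟩, ⟨hx3, hx4⟩⟩ := hne
  set e := m - n with he
  have hme : m = n + e := by omega
  have hpn : (0:ℝ) < (2:ℝ)⁻¹ ^ n := by positivity
  have hpm : (0:ℝ) < (2:ℝ)⁻¹ ^ m := by positivity
  have hkey : (2:ℝ)⁻¹ ^ n = 2 ^ e * (2:ℝ)⁻¹ ^ m := by
    rw [hme, pow_add]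
    field_simp
    rw [← mul_pow]; norm_num
  -- k < (j+1) * 2^e
  have h1 : (k:ℝ) * (2:ℝ)⁻¹ ^ m < ((j:ℝ) + 1) * (2:ℝ)⁻¹ ^ n := lt_of_le_of_lt hx3 hx2
  have h2 : (j:ℝ) * (2:ℝ)⁻¹ ^ n < ((k:ℝ) + 1) * (2:ℝ)⁻¹ ^ m := lt_of_le_of_lt hx1 hx4
  have h1' : (k:ℝ) < ((j:ℝ) + 1) * 2 ^ e := by
    rw [hkey] at h1
    nlinarith
  have h2' : (j:ℝ) * 2 ^ e < (k:ℝ) + 1 := by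
    rw [hkey] at h2
    nlinarith
  have hc1 : k < (j + 1) * 2 ^ e := by exact_mod_cast (by push_cast; exact h1' : (k:ℝ) < ((j + 1 : ℤ) * (2:ℤ) ^ e : ℤ))
  have hc2 : j * 2 ^ e < k + 1 := by exact_mod_cast (by push_cast; exact h2' : ((j * 2 ^ e : ℤ) : ℝ) < ((k + 1 : ℤ) : ℝ))
  have hc1' : k + 1 ≤ (j + 1) * 2 ^ e := hc1
  have hc2' : j * 2 ^ e ≤ k := by omega
  intro x hx
  obtain ⟨ha, hb⟩ := hx
  have hr2 : ((j * 2 ^ e : ℤ) : ℝ) ≤ (k:ℝ) := by exact_mod_cast hc2'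
  have hr1 : ((k:ℝ) + 1) ≤ (((j + 1) * 2 ^ e : ℤ) : ℝ) := by exact_mod_cast hc1'
  push_cast at hr2 hr1
  constructor
  · have : (j:ℝ) * 2 ^ e * (2:ℝ)⁻¹ ^ m ≤ (k:ℝ) * (2:ℝ)⁻¹ ^ m :=
      mul_le_mul_of_nonneg_right hr2 hpm.le
    calc (j:ℝ) * (2:ℝ)⁻¹ ^ n = (j:ℝ) * 2 ^ e * (2:ℝ)⁻¹ ^ m := by rw [hkey]; ring
      _ ≤ (k:ℝ) * (2:ℝ)⁻¹ ^ m := this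
      _ ≤ x := ha
  · have : ((k:ℝ) + 1) * (2:ℝ)⁻¹ ^ m ≤ ((j:ℝ) + 1) * 2 ^ e * (2:ℝ)⁻¹ ^ m :=
      mul_le_mul_of_nonneg_right hr1 hpm.le
    calc x < ((k:ℝ) + 1) * (2:ℝ)⁻¹ ^ m := hb
      _ ≤ ((j:ℝ) + 1) * 2 ^ e * (2:ℝ)⁻¹ ^ m := this
      _ = ((j:ℝ) + 1) * (2:ℝ)⁻¹ ^ n := by rw [hkey]; ring

theorem isPiSystem_dySystem : IsPiSystem dySystem := by
  rintro s ⟨n, j, rfl⟩ t ⟨m, k, rfl⟩ hne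
  rcases le_total n m with h | h
  · have := dyIco_subset_of_le h hne
    rw [Set.inter_eq_self_of_subset_right this]
    exact ⟨m, k, rfl⟩
  · have := dyIco_subset_of_le h (by rwa [Set.inter_comm] at hne)
    rw [Set.inter_eq_self_of_subset_left this]
    exact ⟨n, j, rfl⟩

theorem generateFrom_dySystem_eq :
    MeasurableSpace.generateFrom dySystem = (inferInstance : MeasurableSpace ℝ) := by
  apply le_antisymm
  · apply MeasurableSpace.generateFrom_le
    rintro s ⟨n, k, rfl⟩
    exact measurableSet_Ico
  · rw [(BorelSpace.measurable_eq (α := ℝ)), borel_eq_generateFrom_Iio ℝ]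
    apply MeasurableSpace.generateFrom_le
    rintro s ⟨a, rfl⟩
    have : Iio a = ⋃ p : ℕ × ℤ,
        if ((p.2:ℝ) + 1) * (2:ℝ)⁻¹ ^ p.1 ≤ a then dyIco p.1 p.2 else ∅ := by
      ext x
      simp only [Set.mem_iUnion, Set.mem_Iio]
      constructor
      · intro hx
        obtain ⟨n, hn⟩ := exists_pow_lt_of_lt_one (by linarith : (0:ℝ) < a - x) (by norm_num : (2:ℝ)⁻¹ < 1)
        refine ⟨⟨n, ⌊x * 2 ^ n⌋⟩, ?_⟩
        have hp : (0:ℝ) < 2 ^ n := by positivity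
        have hinv : (2:ℝ)⁻¹ ^ n * 2 ^ n = 1 := by rw [← mul_pow]; norm_num
        have h1 : (⌊x * 2 ^ n⌋ : ℝ) ≤ x * 2 ^ n := Int.floor_le _
        have h2 : x * 2 ^ n < ⌊x * 2 ^ n⌋ + 1 := Int.lt_floor_add_one _
        have hmem : x ∈ dyIco n ⌊x * 2 ^ n⌋ := by
          constructor
          · calc (⌊x * 2 ^ n⌋ : ℝ) * (2:ℝ)⁻¹ ^ n ≤ (x * 2 ^ n) * (2:ℝ)⁻¹ ^ n :=
                mul_le_mul_of_nonneg_right h1 (by positivity)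
            _ = x * (2 ^ n * (2:ℝ)⁻¹ ^ n) := by ring
            _ = x := by rw [mul_comm ((2:ℝ) ^ n)]; rw [hinv, mul_one]
          · have := mul_lt_mul_of_pos_right h2 (show (0:ℝ) < (2:ℝ)⁻¹ ^ n by positivity)
            calc x = x * (2 ^ n * (2:ℝ)⁻¹ ^ n) := by
                  rw [mul_comm ((2:ℝ) ^ n)]; rw [hinv, mul_one]
              _ = (x * 2 ^ n) * (2:ℝ)⁻¹ ^ n := by ring
              _ < ((⌊x * 2 ^ n⌋:ℝ) + 1) * (2:ℝ)⁻¹ ^ n := this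
        have hcond : ((⌊x * 2 ^ n⌋:ℝ) + 1) * (2:ℝ)⁻¹ ^ n ≤ a := by
          have hxle : (⌊x * 2 ^ n⌋:ℝ) * (2:ℝ)⁻¹ ^ n ≤ x := hmem.1
          have : ((⌊x * 2 ^ n⌋:ℝ) + 1) * (2:ℝ)⁻¹ ^ n
              = (⌊x * 2 ^ n⌋:ℝ) * (2:ℝ)⁻¹ ^ n + (2:ℝ)⁻¹ ^ n := by ring
          rw [this]
          linarith
        rw [if_pos hcond]
        exact hmem
      · rintro ⟨⟨n, k⟩, hk⟩
        by_cases hcond : ((k:ℝ) + 1) * (2:ℝ)⁻¹ ^ n ≤ a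
        · rw [if_pos hcond] at hk
          exact lt_of_lt_of_le hk.2 hcond
        · rw [if_neg hcond] at hk
          exact absurd hk (Set.notMem_empty x)
    rw [this]
    apply MeasurableSet.iUnion
    intro p
    by_cases hcond : ((p.2:ℝ) + 1) * (2:ℝ)⁻¹ ^ p.1 ≤ a
    · rw [if_pos hcond]
      exact MeasurableSpace.measurableSet_generateFrom ⟨p.1, p.2, rfl⟩
    · rw [if_neg hcond]
      exact @MeasurableSet.empty _ (MeasurableSpace.generateFrom dySystem)

theorem ofReal_inv_two_pow (n : ℕ) :
    ENNReal.ofReal ((2:ℝ)⁻¹ ^ n) = (2 : ENNReal)⁻¹ ^ n := by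
  rw [ENNReal.ofReal_pow (by norm_num)]
  congr 1
  rw [show ((2:ℝ)⁻¹) = 1/2 by norm_num]
  rw [ENNReal.ofReal_div_of_pos (by norm_num)]
  simp [ENNReal.ofReal_one, ENNReal.ofReal_ofNat]

theorem volume_restrict_dyIco (n : ℕ) (k : ℤ) :
    (volume.restrict (Ico (0:ℝ) 1)) (dyIco n k) =
      if 0 ≤ k ∧ k < 2 ^ n then (2 : ENNReal)⁻¹ ^ n else 0 := by
  have hmeas : MeasurableSet (dyIco n k) := by unfold dyIco; exact measurableSet_Ico
  rw [Measure.restrict_apply hmeas]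
  have hpn : (0:ℝ) < (2:ℝ)⁻¹ ^ n := by positivity
  have hinv : (2:ℝ)⁻¹ ^ n * 2 ^ n = 1 := by rw [← mul_pow]; norm_num
  by_cases h : 0 ≤ k ∧ k < 2 ^ n
  · rw [if_pos h]
    have hsub : dyIco n k ⊆ Ico (0:ℝ) 1 := by
      rintro x ⟨hx1, hx2⟩
      have hk0 : (0:ℝ) ≤ (k:ℝ) := by exact_mod_cast h.1
      have hk1 : (k:ℝ) + 1 ≤ 2 ^ n := by
        have : ((k + 1 : ℤ) : ℝ) ≤ ((2 ^ n : ℤ) : ℝ) := by exact_mod_cast h.2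
        push_cast at this; linarith
      constructor
      · nlinarith
      · have : ((k:ℝ) + 1) * (2:ℝ)⁻¹ ^ n ≤ (2:ℝ) ^ n * (2:ℝ)⁻¹ ^ n :=
          mul_le_mul_of_nonneg_right hk1 hpn.le
        rw [mul_comm ((2:ℝ) ^ n)] at this
        rw [hinv] at this
        linarith
    rw [Set.inter_eq_self_of_subset_left hsub]
    unfold dyIco
    rw [Real.volume_Ico]
    rw [show ((k:ℝ) + 1) * (2:ℝ)⁻¹ ^ n - (k:ℝ) * (2:ℝ)⁻¹ ^ n = (2:ℝ)⁻¹ ^ n by ring]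
    exact ofReal_inv_two_pow n
  · rw [if_neg h]
    have : dyIco n k ∩ Ico (0:ℝ) 1 = ∅ := by
      rcases not_and_or.mp h with h' | h'
      · push_neg at h'
        apply Set.eq_empty_of_forall_notMem
        rintro x ⟨⟨hx1, hx2⟩, hx3, hx4⟩
        have : (k:ℝ) + 1 ≤ 0 := by
          have : ((k + 1 : ℤ) : ℝ) ≤ 0 := by exact_mod_cast (by omega : k + 1 ≤ 0)
          push_cast at this; linarith
        nlinarith
      · push_neg at h'
        apply Set.eq_empty_of_forall_notMem
        rintro x ⟨⟨hx1, hx2⟩, hx3, hx4⟩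
        have hk : (2:ℝ) ^ n ≤ (k:ℝ) := by
          have : ((2 ^ n : ℤ) : ℝ) ≤ (k:ℝ) := by exact_mod_cast h'
          push_cast at this; linarith
        have h1 : (2:ℝ) ^ n * (2:ℝ)⁻¹ ^ n ≤ (k:ℝ) * (2:ℝ)⁻¹ ^ n :=
          mul_le_mul_of_nonneg_right hk hpn.le
        rw [mul_comm ((2:ℝ) ^ n), hinv] at h1
        nlinarith
    rw [this]
    simp

theorem map_dmap_dyIco {μ : Measure (ℕ → Bool)} (hμ : IsCoinMeasure μ) (n : ℕ) (k : ℤ) :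
    μ (dmap ⁻¹' dyIco n k) = if 0 ≤ k ∧ k < 2 ^ n then (2 : ENNReal)⁻¹ ^ n else 0 := by
  have hE := coin_Etail_null hμ
  have hpn : (0:ℝ) < (2:ℝ)⁻¹ ^ n := by positivity
  by_cases h : 0 ≤ k ∧ k < 2 ^ n
  · rw [if_pos h]
    set K := k.toNat with hKdef
    have hkK : (k:ℝ) = (K:ℝ) := by
      rw [hKdef]; exact_mod_cast (Int.toNat_of_nonneg h.1).symm
    have hKlt : K < 2 ^ n := by
      zify
      rw [Int.toNat_of_nonneg h.1]
      exact_mod_cast h.2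
    obtain ⟨w, hw⟩ := Nval_surj n K hKlt
    set C := {y : ℕ → Bool | ∀ i ∈ Finset.range n, y i = w i} with hC
    have hmemC : ∀ y, y ∉ Etail → (y ∈ dmap ⁻¹' dyIco n k ↔ y ∈ C) := by
      intro y hy
      have hiff := dmap_mem_dyadic_iff y hy n K
      constructor
      · intro hmem
        have : Nval y n = K := by
          apply hiff.mp
          simpa [dyIco, hkK] using hmem
        intro i hi
        exact Nval_inj (this.trans hw.symm) i (Finset.mem_range.mp hi)
      · intro hmem
        have hN : Nval y n = K := by
          rw [← hw]
          exact Nval_congr fun i hi => hmem i (Finset.mem_range.mpr hi)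
        have := hiff.mpr hN
        simpa [dyIco, hkK] using this
    have hle1 : μ (dmap ⁻¹' dyIco n k) ≤ μ C := by
      calc μ (dmap ⁻¹' dyIco n k) ≤ μ (C ∪ Etail) := by
            apply measure_mono
            intro y hy
            by_cases hyE : y ∈ Etail
            · exact Or.inr hyE
            · exact Or.inl ((hmemC y hyE).mp hy)
        _ ≤ μ C + μ Etail := measure_union_le _ _
        _ = μ C := by rw [hE, add_zero]
    have hle2 : μ C ≤ μ (dmap ⁻¹' dyIco n k) := by
      calc μ C ≤ μ (dmap ⁻¹' dyIco n k ∪ Etail) := by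
            apply measure_mono
            intro y hy
            by_cases hyE : y ∈ Etail
            · exact Or.inr hyE
            · exact Or.inl ((hmemC y hyE).mpr hy)
        _ ≤ μ (dmap ⁻¹' dyIco n k) + μ Etail := measure_union_le _ _
        _ = μ (dmap ⁻¹' dyIco n k) := by rw [hE, add_zero]
    have : μ C = (2 : ENNReal)⁻¹ ^ n := by
      have := hμ (Finset.range n) w
      rwa [Finset.card_range] at this
    rw [← this]
    exact le_antisymm hle1 hle2
  · rw [if_neg h]
    rcases not_and_or.mp h with h' | h'
    · push_neg at h'
      have : dmap ⁻¹' dyIco n k = ∅ := by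
        apply Set.eq_empty_of_forall_notMem
        rintro y ⟨hy1, hy2⟩
        have h0 : (0:ℝ) ≤ dmap y := dmap_nonneg y
        have : (k:ℝ) + 1 ≤ 0 := by
          have : ((k + 1 : ℤ) : ℝ) ≤ 0 := by exact_mod_cast (by omega : k + 1 ≤ 0)
          push_cast at this; linarith
        nlinarith
      rw [this]; simp
    · push_neg at h'
      apply le_antisymm _ (zero_le)
      calc μ (dmap ⁻¹' dyIco n k) ≤ μ Etail := by
            apply measure_mono
            intro y hy
            by_contra hyE
            have hlt := dmap_mem_dyadic_iff y hyE n (Nval y n) |>.mpr rfl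
            -- y's interval is [Nval, Nval+1) with Nval < 2^n; but dmap y ≥ k ≥ 2^n
            have hNlt := Nval_lt y n
            have hy' : dmap y ∈ Ico ((k:ℝ) * (2:ℝ)⁻¹ ^ n) (((k:ℝ) + 1) * (2:ℝ)⁻¹ ^ n) := hy
            obtain ⟨hy1, hy2⟩ := hy'
            have hupper : dmap y < 1 := dmap_lt_one y hyE
            have hk : (2:ℝ) ^ n ≤ (k:ℝ) := by
              have : ((2 ^ n : ℤ) : ℝ) ≤ (k:ℝ) := by exact_mod_cast h'
              push_cast at this; linarith
            have hinv : (2:ℝ)⁻¹ ^ n * 2 ^ n = 1 := by rw [← mul_pow]; norm_num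
            have h1 : (2:ℝ) ^ n * (2:ℝ)⁻¹ ^ n ≤ (k:ℝ) * (2:ℝ)⁻¹ ^ n :=
              mul_le_mul_of_nonneg_right hk hpn.le
            rw [mul_comm ((2:ℝ) ^ n), hinv] at h1
            nlinarith
        _ = 0 := hE

theorem map_dmap_eq {μ : Measure (ℕ → Bool)} (hμ : IsCoinMeasure μ) :
    Measure.map dmap μ = volume.restrict (Ico (0:ℝ) 1) := by
  haveI := coin_prob hμ
  haveI : IsProbabilityMeasure (Measure.map dmap μ) :=
    Measure.isProbabilityMeasure_map measurable_dmap.aemeasurable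
  apply MeasureTheory.ext_of_generate_finite dySystem generateFrom_dySystem_eq.symm
    isPiSystem_dySystem
  · rintro s ⟨n, k, rfl⟩
    have hmeas : MeasurableSet (dyIco n k) := by unfold dyIco; exact measurableSet_Ico
    rw [Measure.map_apply measurable_dmap hmeas]
    rw [map_dmap_dyIco hμ n k, volume_restrict_dyIco n k]
  · rw [measure_univ]
    rw [Measure.restrict_apply_univ, Real.volume_Ico]
    norm_num

def Cyl (s : Finset ℕ) (f : ℕ → Bool) : Set (ℕ → Bool) := {x | ∀ i ∈ s, x i = f i}

theorem measurableSet_Cyl (s : Finset ℕ) (f : ℕ → Bool) : MeasurableSet (Cyl s f) := by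
  have : Cyl s f = ⋂ i ∈ s, {x : ℕ → Bool | x i = f i} := by
    ext x; simp [Cyl]
  rw [this]
  apply MeasurableSet.biInter s.countable_toSet
  intro i _
  have h2 : {x : ℕ → Bool | x i = f i} = (fun x : ℕ → Bool => x i) ⁻¹' {f i} := by
    ext x; simp
  rw [h2]
  exact measurable_pi_apply i (measurableSet_singleton _)

def Boxes : Set (Set ((ℕ → Bool) × (ℕ → Bool))) :=
  {S | ∃ (s t : Finset ℕ) (f g : ℕ → Bool), S = Cyl s f ×ˢ Cyl t g}

theorem box_eq (s t : Finset ℕ) (f g : ℕ → Bool) :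
    {z : (ℕ → Bool) × (ℕ → Bool) | (∀ i ∈ s, z.1 i = f i) ∧ (∀ j ∈ t, z.2 j = g j)} =
      Cyl s f ×ˢ Cyl t g := by
  ext z
  simp [Cyl, Set.mem_prod]

theorem isPiSystem_Boxes : IsPiSystem Boxes := by
  rintro S ⟨s, t, f, g, rfl⟩ T ⟨s', t', f', g', rfl⟩ hne
  obtain ⟨z₀, ⟨hz1, hz2⟩, ⟨hz3, hz4⟩⟩ := hne
  refine ⟨s ∪ s', t ∪ t', fun i => if i ∈ s then f i else f' i,
    fun j => if j ∈ t then g j else g' j, ?_⟩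
  ext z
  simp only [Set.mem_inter_iff, Set.mem_prod, Cyl, Set.mem_setOf_eq, Finset.mem_union]
  constructor
  · rintro ⟨⟨h1, h2⟩, h3, h4⟩
    constructor
    · intro i hi
      by_cases his : i ∈ s
      · rw [if_pos his]; exact h1 i his
      · rw [if_neg his]
        exact h3 i (hi.resolve_left his)
    · intro j hj
      by_cases hjt : j ∈ t
      · rw [if_pos hjt]; exact h2 j hjt
      · rw [if_neg hjt]
        exact h4 j (hj.resolve_left hjt)
  · rintro ⟨h1, h2⟩
    refine ⟨⟨fun i hi => ?_, fun j hj => ?_⟩, fun i hi => ?_, fun j hj => ?_⟩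
    · have := h1 i (Or.inl hi); rwa [if_pos hi] at this
    · have := h2 j (Or.inl hj); rwa [if_pos hj] at this
    · have := h1 i (Or.inr hi)
      by_cases his : i ∈ s
      · rw [if_pos his] at this
        rw [this, ← hz1 i his, hz3 i hi]
      · rwa [if_neg his] at this
    · have := h2 j (Or.inr hj)
      by_cases hjt : j ∈ t
      · rw [if_pos hjt] at this
        rw [this, ← hz2 j hjt, hz4 j hj]
      · rwa [if_neg hjt] at this

theorem comap_coord_le (G : MeasurableSpace ((ℕ → Bool) × (ℕ → Bool)))
    (F : ((ℕ → Bool) × (ℕ → Bool)) → (ℕ → Bool))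
    (h : ∀ i : ℕ, ∀ b : Bool, MeasurableSet[G] ((fun z => F z i) ⁻¹' {b})) :
    MeasurableSpace.comap F inferInstance ≤ G := by
  have hpi : (inferInstance : MeasurableSpace (ℕ → Bool)) =
      ⨆ i : ℕ, MeasurableSpace.comap (fun y : ℕ → Bool => y i) inferInstance := rfl
  rw [hpi, MeasurableSpace.comap_iSup]
  apply iSup_le
  intro i
  rw [MeasurableSpace.comap_comp]
  rintro s ⟨t, -, rfl⟩
  by_cases ht : true ∈ t <;> by_cases hf : false ∈ t
  · have : ((fun y : ℕ → Bool => y i) ∘ F) ⁻¹' t = Set.univ := by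
      ext z
      simp only [Set.mem_preimage, Function.comp_apply, Set.mem_univ, iff_true]
      cases hFz : F z i
      · exact hf
      · exact ht
    rw [this]; exact MeasurableSet.univ
  · have : ((fun y : ℕ → Bool => y i) ∘ F) ⁻¹' t = (fun z => F z i) ⁻¹' {true} := by
      ext z
      simp only [Set.mem_preimage, Function.comp_apply, Set.mem_singleton_iff]
      cases hFz : F z i
      · simp [hf]
      · simp [ht]
    rw [this]; exact h i true
  · have : ((fun y : ℕ → Bool => y i) ∘ F) ⁻¹' t = (fun z => F z i) ⁻¹' {false} := by
      ext z
      simp only [Set.mem_preimage, Function.comp_apply, Set.mem_singleton_iff]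
      cases hFz : F z i
      · simp [hf]
      · simp [ht]
    rw [this]; exact h i false
  · have : ((fun y : ℕ → Bool => y i) ∘ F) ⁻¹' t = ∅ := by
      ext z
      simp only [Set.mem_preimage, Function.comp_apply, Set.mem_empty_iff_false, iff_false]
      cases hFz : F z i
      · exact hf
      · exact ht
    rw [this]; exact MeasurableSet.empty

theorem generateFrom_Boxes_eq :
    MeasurableSpace.generateFrom Boxes =
      (inferInstance : MeasurableSpace ((ℕ → Bool) × (ℕ → Bool))) := by
  apply le_antisymm
  · apply MeasurableSpace.generateFrom_le
    rintro S ⟨s, t, f, g, rfl⟩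
    exact (measurableSet_Cyl s f).prod (measurableSet_Cyl t g)
  · rw [show (inferInstance : MeasurableSpace ((ℕ → Bool) × (ℕ → Bool))) =
      MeasurableSpace.comap Prod.fst inferInstance ⊔ MeasurableSpace.comap Prod.snd inferInstance
      from rfl]
    apply sup_le
    · apply comap_coord_le
      intro i b
      have : (fun z : (ℕ → Bool) × (ℕ → Bool) => z.1 i) ⁻¹' {b} =
          Cyl {i} (fun _ => b) ×ˢ Cyl ∅ (fun _ => b) := by
        ext z; simp [Cyl]
      rw [this]
      exact MeasurableSpace.measurableSet_generateFrom ⟨{i}, ∅, _, _, rfl⟩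
    · apply comap_coord_le
      intro i b
      have : (fun z : (ℕ → Bool) × (ℕ → Bool) => z.2 i) ⁻¹' {b} =
          Cyl ∅ (fun _ => b) ×ˢ Cyl {i} (fun _ => b) := by
        ext z; simp [Cyl]
      rw [this]
      exact MeasurableSpace.measurableSet_generateFrom ⟨∅, {i}, _, _, rfl⟩

theorem coin2_eq_prod {μ : Measure (ℕ → Bool)} (hμ : IsCoinMeasure μ)
    {μ₂ : Measure ((ℕ → Bool) × (ℕ → Bool))} (hμ₂ : IsCoinMeasure2 μ₂) :
    μ₂ = μ.prod μ := by
  haveI := coin_prob hμ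
  haveI : IsProbabilityMeasure μ₂ := by
    constructor
    have := hμ₂ ∅ ∅ (fun _ => true) (fun _ => true)
    simpa using this
  apply MeasureTheory.ext_of_generate_finite Boxes generateFrom_Boxes_eq.symm isPiSystem_Boxes
  · rintro S ⟨s, t, f, g, rfl⟩
    rw [← box_eq]
    rw [hμ₂ s t f g]
    rw [box_eq, Measure.prod_prod]
    have h1 : μ (Cyl s f) = (2 : ENNReal)⁻¹ ^ s.card := hμ s f
    have h2 : μ (Cyl t g) = (2 : ENNReal)⁻¹ ^ t.card := hμ t g
    rw [h1, h2, ← pow_add]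
  · simp

theorem graph_not_nullMeasurable {μ : Measure (ℕ → Bool)} (hμ : IsCoinMeasure μ)
    {μ₂ : Measure ((ℕ → Bool) × (ℕ → Bool))} (hμ₂ : IsCoinMeasure2 μ₂)
    {G : Set ((ℕ → Bool) × (ℕ → Bool))}
    (hgraph : ∀ x b b', (x, b) ∈ G → (x, b') ∈ G → b = b')
    (hpos : 0 < μ₂ G) : ¬ NullMeasurableSet G μ₂ := by
  haveI := coin_prob hμ
  intro hnm
  obtain ⟨B, hBsub, hBmeas, hBae⟩ := hnm.exists_measurable_subset_ae_eq
  have hμB : μ₂ B = μ₂ G := measure_congr hBae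
  have hprod : μ₂ = μ.prod μ := coin2_eq_prod hμ hμ₂
  have hzero : μ₂ B = 0 := by
    rw [hprod, Measure.prod_apply hBmeas]
    have : ∀ x, μ (Prod.mk x ⁻¹' B) = 0 := by
      intro x
      have hss : (Prod.mk x ⁻¹' B).Subsingleton := by
        intro b hb b' hb'
        exact hgraph x b b' (hBsub hb) (hBsub hb')
      rcases hss.eq_empty_or_singleton with h | ⟨b, h⟩
      · rw [h]; simp
      · rw [h]; exact coin_singleton hμ b
    simp only [this]
    simp
  exact absurd (hμB.symm.trans hzero) hpos.ne'
theorem lusin_lite {H : ℝ → ℝ} (hH : Measurable H) {P : Set ℝ}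
    (hP1 : P ⊆ Icc (0:ℝ) 1) (hP : 0 < volume P) :
    ∃ g : ℝ → ℝ, Continuous g ∧ 0 < volume {x | x ∈ P ∧ H x = g x} := by
  obtain ⟨M, hM⟩ : ∃ M : ℕ, 0 < volume {x | x ∈ P ∧ |H x| ≤ (M:ℝ)} := by
    by_contra hcon
    push_neg at hcon
    simp only [nonpos_iff_eq_zero] at hcon
    have hcover : P ⊆ ⋃ M : ℕ, {x | x ∈ P ∧ |H x| ≤ (M:ℝ)} := by
      intro x hx
      exact Set.mem_iUnion.mpr ⟨⌈|H x|⌉₊, hx, Nat.le_ceil _⟩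
    have : volume P ≤ ∑' M : ℕ, volume {x | x ∈ P ∧ |H x| ≤ (M:ℝ)} :=
      (measure_mono hcover).trans (measure_iUnion_le _)
    simp only [hcon, tsum_zero] at this
    exact absurd (le_antisymm this (zero_le)) hP.ne'
  set PM := {x | x ∈ P ∧ |H x| ≤ (M:ℝ)} with hPM
  set c := volume PM with hc
  have hcle : c ≤ 1 := by
    have hsub : PM ⊆ Icc (0:ℝ) 1 := fun x hx => hP1 hx.1
    calc c ≤ volume (Icc (0:ℝ) 1) := measure_mono hsub
      _ = 1 := by rw [Real.volume_Icc]; norm_num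
  have hcne : c ≠ ⊤ := (hcle.trans_lt (by norm_num)).ne
  have hcpos : 0 < c := hM
  have hctr : 0 < c.toReal := ENNReal.toReal_pos hcpos.ne' hcne
  set ε := c.toReal / 4 with hε
  have hεpos : 0 < ε := by positivity
  have hofε : ENNReal.ofReal ε + ENNReal.ofReal ε < c := by
    rw [← ENNReal.ofReal_add hεpos.le hεpos.le]
    have h2 : ε + ε = c.toReal / 2 := by rw [hε]; ring
    rw [h2]
    conv_rhs => rw [show c = ENNReal.ofReal c.toReal by rw [ENNReal.ofReal_toReal hcne]]
    rw [ENNReal.ofReal_lt_ofReal_iff hctr]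
    linarith
  set H' := Set.indicator (Icc (-1:ℝ) 2) (fun x => max (-(M:ℝ)) (min (M:ℝ) (H x))) with hH'
  have hH'meas : Measurable H' :=
    (measurable_const.max (measurable_const.min hH)).indicator measurableSet_Icc
  have hH'eq : ∀ x ∈ PM, H' x = H x := by
    rintro x ⟨hxP, hxM⟩
    have hx01 : x ∈ Icc (0:ℝ) 1 := hP1 hxP
    have hx12 : x ∈ Icc (-1:ℝ) 2 := ⟨by linarith [hx01.1], by linarith [hx01.2]⟩
    rw [hH', Set.indicator_of_mem hx12]
    rw [abs_le] at hxM
    rw [min_eq_right hxM.2, max_eq_right hxM.1]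
  have hH'bdd : ∀ x, ‖H' x‖ ≤ (Icc (-1:ℝ) 2).indicator (fun _ => (M:ℝ)) x := by
    intro x
    by_cases hx : x ∈ Icc (-1:ℝ) 2
    · rw [hH', Set.indicator_of_mem hx, Set.indicator_of_mem hx]
      rw [Real.norm_eq_abs, abs_le]
      have hMnn : (0:ℝ) ≤ (M:ℝ) := Nat.cast_nonneg M
      exact ⟨le_max_left _ _, max_le (by linarith) (min_le_left _ _)⟩
    · rw [hH', Set.indicator_of_notMem hx, Set.indicator_of_notMem hx]
      simp
  have hH'int : Integrable H' volume := by
    have hbound : Integrable ((Icc (-1:ℝ) 2).indicator fun _ => (M:ℝ)) volume := by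
      rw [integrable_indicator_iff measurableSet_Icc]
      exact integrableOn_const (by rw [Real.volume_Icc]; exact ENNReal.ofReal_ne_top)
    exact hbound.mono' hH'meas.aestronglyMeasurable (Filter.Eventually.of_forall hH'bdd)
  -- approximating sequence
  have hgs : ∀ n : ℕ, ∃ g : ℝ → ℝ, Continuous g ∧
      eLpNorm (fun x => g x - H' x) 1 volume ≤ (2:ENNReal)⁻¹ ^ n := by
    intro n
    obtain ⟨g, _, hint, hcont, _⟩ :=
      hH'int.exists_hasCompactSupport_lintegral_sub_le
        (ε := (2:ENNReal)⁻¹ ^ n) (pow_ne_zero n (by simp))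
    refine ⟨g, hcont, ?_⟩
    rw [eLpNorm_one_eq_lintegral_enorm]
    calc ∫⁻ x, ‖g x - H' x‖ₑ ∂volume = ∫⁻ x, ‖H' x - g x‖ₑ ∂volume := by
          apply lintegral_congr
          intro x
          rw [← enorm_neg, neg_sub]
      _ ≤ (2:ENNReal)⁻¹ ^ n := hint
  choose gs hgscont hgsnorm using hgs
  have htend : Filter.Tendsto (fun n => eLpNorm (gs n - H') 1 volume)
      Filter.atTop (nhds 0) := by
    apply tendsto_of_tendsto_of_tendsto_of_le_of_le tendsto_const_nhds
      (ENNReal.tendsto_pow_atTop_nhds_zero_of_lt_one (by norm_num : (2:ENNReal)⁻¹ < 1))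
    · exact fun n => zero_le
    · intro n
      exact hgsnorm n
  have htim : TendstoInMeasure volume gs Filter.atTop H' :=
    tendstoInMeasure_of_tendsto_eLpNorm one_ne_zero
      (fun n => (hgscont n).aestronglyMeasurable)
      hH'meas.aestronglyMeasurable htend
  obtain ⟨ns, -, hae⟩ := htim.exists_seq_tendsto_ae
  -- Egorov on [0,1]
  set ν := volume.restrict (Icc (0:ℝ) 1) with hν
  haveI : IsFiniteMeasure ν := by
    constructor
    rw [hν, Measure.restrict_apply_univ, Real.volume_Icc]
    exact ENNReal.ofReal_lt_top
  have haeν : ∀ᵐ x ∂ν, Filter.Tendsto (fun k => gs (ns k) x) Filter.atTop (nhds (H' x)) :=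
    ae_restrict_of_ae hae
  obtain ⟨t, htmeas, htsmall, htu⟩ :=
    tendstoUniformlyOn_of_ae_tendsto' (μ := ν)
      (fun k => (hgscont (ns k)).stronglyMeasurable)
      hH'meas.stronglyMeasurable haeν hεpos
  have hcontH' : ContinuousOn H' tᶜ :=
    htu.continuousOn (Filter.Eventually.of_forall fun k => (hgscont (ns k)).continuousOn).frequently
  -- compact subset
  set s₀ := tᶜ ∩ Icc (0:ℝ) 1 with hs₀
  have hs₀meas : MeasurableSet s₀ := htmeas.compl.inter measurableSet_Icc
  have hs₀fin : volume s₀ ≠ ⊤ := by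
    apply ne_of_lt
    calc volume s₀ ≤ volume (Icc (0:ℝ) 1) := measure_mono Set.inter_subset_right
      _ < ⊤ := by rw [Real.volume_Icc]; exact ENNReal.ofReal_lt_top
  obtain ⟨K, hKsub, hKcomp, hKdiff⟩ :=
    hs₀meas.exists_isCompact_diff_lt hs₀fin (ε := ENNReal.ofReal ε)
      (by simp [hεpos, ENNReal.ofReal_eq_zero, not_le])
  have hKcont : ContinuousOn H' K :=
    hcontH'.mono (hKsub.trans Set.inter_subset_left)
  -- Tietze extension
  obtain ⟨g, hg⟩ := ContinuousMap.exists_restrict_eq (Y := ℝ) hKcomp.isClosed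
    ⟨K.restrict H', continuousOn_iff_continuous_restrict.mp hKcont⟩
  have hgK : ∀ x ∈ K, g x = H' x := by
    intro x hx
    have := DFunLike.congr_fun hg (⟨x, hx⟩ : K)
    exact this
  refine ⟨g, g.continuous, ?_⟩
  have hsup : PM ∩ K ⊆ {x | x ∈ P ∧ H x = g x} := by
    rintro x ⟨hxPM, hxK⟩
    exact ⟨hxPM.1, by rw [← hH'eq x hxPM, ← hgK x hxK]⟩
  have hPMsplit : volume (PM \ K) ≤ ENNReal.ofReal ε + ENNReal.ofReal ε := by
    have hsub : PM \ K ⊆ (t ∩ Icc (0:ℝ) 1) ∪ (s₀ \ K) := by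
      rintro x ⟨hxPM, hxK⟩
      have hx01 : x ∈ Icc (0:ℝ) 1 := hP1 hxPM.1
      by_cases hxt : x ∈ t
      · exact Or.inl ⟨hxt, hx01⟩
      · exact Or.inr ⟨⟨hxt, hx01⟩, hxK⟩
    calc volume (PM \ K) ≤ volume ((t ∩ Icc (0:ℝ) 1) ∪ (s₀ \ K)) := measure_mono hsub
      _ ≤ volume (t ∩ Icc (0:ℝ) 1) + volume (s₀ \ K) := measure_union_le _ _
      _ ≤ ENNReal.ofReal ε + ENNReal.ofReal ε := by
          apply add_le_add
          · rw [← Measure.restrict_apply htmeas]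
            exact htsmall
          · exact hKdiff.le
  have hpos : 0 < volume (PM ∩ K) := by
    by_contra hcon
    push_neg at hcon
    have h0 : volume (PM ∩ K) = 0 := le_antisymm hcon (zero_le)
    have : c ≤ volume (PM ∩ K) + volume (PM \ K) := by
      rw [hc]
      conv_lhs => rw [show PM = (PM ∩ K) ∪ (PM \ K) by rw [Set.inter_union_diff]]
      exact measure_union_le _ _
    rw [h0, zero_add] at this
    exact absurd (this.trans hPMsplit) (not_le.mpr hofε)
  exact hpos.trans_le (measure_mono hsup)
noncomputable def encR (x : ℝ) : ℕ → Bool := emap (Real.arctan x / Real.pi + 1/2)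

noncomputable def decR (z : ℕ → Bool) : ℝ := Real.tan ((dmap z - 1/2) * Real.pi)

theorem arctan_unit_mem (x : ℝ) : Real.arctan x / Real.pi + 1/2 ∈ Ico (0:ℝ) 1 := by
  have hπ : 0 < Real.pi := Real.pi_pos
  have h1 : -(Real.pi/2) < Real.arctan x := Real.neg_pi_div_two_lt_arctan x
  have h2 : Real.arctan x < Real.pi/2 := Real.arctan_lt_pi_div_two x
  have hl : -(1/2 : ℝ) < Real.arctan x / Real.pi := by
    rw [neg_lt, ← neg_div, div_lt_iff₀ hπ]
    linarith
  have hr : Real.arctan x / Real.pi < 1/2 := by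
    rw [div_lt_iff₀ hπ]
    linarith
  constructor <;> [linarith; linarith]

theorem decR_encR (x : ℝ) : decR (encR x) = x := by
  unfold decR encR
  rw [dmap_emap _ (arctan_unit_mem x)]
  have hπ : Real.pi ≠ 0 := Real.pi_ne_zero
  have : (Real.arctan x / Real.pi + 1/2 - 1/2) * Real.pi = Real.arctan x := by
    field_simp
    ring
  rw [this, Real.tan_arctan]

theorem measurable_encR : Measurable encR :=
  measurable_emap.comp
    ((Real.continuous_arctan.measurable.div_const _).add_const _)

theorem measurable_decR : Measurable decR := by
  have hinner : Measurable fun z : ℕ → Bool => (dmap z - 1/2) * Real.pi :=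
    (measurable_dmap.sub_const _).mul_const _
  have htan : ∀ y : ℝ, Real.tan y = Real.sin y / Real.cos y := fun y => Real.tan_eq_sin_div_cos y
  unfold decR
  simp only [htan]
  exact (Real.continuous_sin.measurable.comp hinner).div
    (Real.continuous_cos.measurable.comp hinner)

/-- assuming (a) the Cantor-space graph condition and (b) the
decomposition property for arbitrary functions `2^ℕ → 2^ℕ`, every function
`f : ℝ → ℝ` agrees with some continuous `g : ℝ → ℝ` on a set of positive outer
Lebesgue measure. -/
theorem continuous_on_nonnull_of_graph_conditions
    (μ : Measure (ℕ → Bool)) (hμ : IsCoinMeasure μ)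
    (μ₂ : Measure ((ℕ → Bool) × (ℕ → Bool))) (hμ₂ : IsCoinMeasure2 μ₂)
    (ha : ∀ A : Set ((ℕ → Bool) × (ℕ → Bool)), ¬ NullMeasurableSet A μ₂ →
      ∃ f : (ℕ → Bool) → (ℕ → Bool), Measurable f ∧
        ¬ NullMeasurableSet {x : ℕ → Bool | (x, f x) ∈ A} μ)
    (hb : ∀ fstar : (ℕ → Bool) → (ℕ → Bool),
      ∃ (A : Set (ℕ → Bool)) (f₁ : A → (ℕ → Bool))
        (f₂ : (ℕ → Bool) × (ℕ → Bool) → (ℕ → Bool)),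
        0 < μ₂ (Set.range fun x : A => ((x : ℕ → Bool), f₁ x)) ∧
        Measurable f₂ ∧
        ∀ x : A, fstar x = f₂ ((x : ℕ → Bool), f₁ x)) :
    ∀ f : ℝ → ℝ, ∃ g : ℝ → ℝ, Continuous g ∧ 0 < volume {x : ℝ | f x = g x} := by
  intro f
  set fstar := fun y : ℕ → Bool => encR (f (dmap y)) with hfstar
  obtain ⟨A, f₁, f₂, hpos, hf₂, hfs⟩ := hb fstar
  set G := Set.range (fun x : A => ((x : ℕ → Bool), f₁ x)) with hG
  have hgraph : ∀ x b b', (x, b) ∈ G → (x, b') ∈ G → b = b' := by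
    rintro x b b' ⟨a, ha1⟩ ⟨a', ha2⟩
    have h1 : (a : ℕ → Bool) = x := congrArg Prod.fst ha1
    have h2 : (a' : ℕ → Bool) = x := congrArg Prod.fst ha2
    have haa : a = a' := Subtype.ext (h1.trans h2.symm)
    have hb1 : f₁ a = b := congrArg Prod.snd ha1
    have hb2 : f₁ a' = b' := congrArg Prod.snd ha2
    rw [← hb1, ← hb2, haa]
  have hGnm : ¬ NullMeasurableSet G μ₂ := graph_not_nullMeasurable hμ hμ₂ hgraph hpos
  obtain ⟨φ, hφ, hTnm⟩ := ha G hGnm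
  set T := {x : ℕ → Bool | (x, φ x) ∈ G} with hT
  have hTpos : 0 < μ T := by
    rcases eq_or_lt_of_le (zero_le : 0 ≤ μ T) with h | h
    · exact absurd (NullMeasurableSet.of_null h.symm) hTnm
    · exact h
  set h := fun y : ℕ → Bool => f₂ (y, φ y) with hh
  have hhmeas : Measurable h := hf₂.comp (measurable_id.prodMk hφ)
  have hTeq : ∀ x ∈ T, fstar x = h x := by
    intro x hx
    obtain ⟨a, ha1⟩ := hx
    have h1 : (a : ℕ → Bool) = x := congrArg Prod.fst ha1
    have h2 : f₁ a = φ x := congrArg Prod.snd ha1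
    have := hfs a
    rw [h1, h2] at this
    exact this
  set T' := T \ Etail with hT'
  have hT'pos : 0 < μ T' := by
    rcases eq_or_lt_of_le (zero_le : 0 ≤ μ T') with h0 | h0
    · exfalso
      have : μ T ≤ μ T' + μ Etail := by
        calc μ T ≤ μ (T' ∪ Etail) := measure_mono (fun x hx => by
              by_cases hE : x ∈ Etail
              · exact Or.inr hE
              · exact Or.inl ⟨hx, hE⟩)
          _ ≤ μ T' + μ Etail := measure_union_le _ _
      rw [← h0, coin_Etail_null hμ, add_zero] at this
      exact absurd (le_antisymm this (zero_le)) hTpos.ne'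
    · exact h0
  set P := dmap '' T' with hP
  have hPsub : P ⊆ Icc (0:ℝ) 1 := by
    rintro x ⟨y, -, rfl⟩
    exact ⟨dmap_nonneg y, dmap_le_one y⟩
  have hPpos : 0 < volume P := by
    rcases eq_or_lt_of_le (zero_le : 0 ≤ volume P) with h0 | h0
    · exfalso
      obtain ⟨N, hPN, hNmeas, hN0⟩ := exists_measurable_superset_of_null h0.symm
      have hsub : T' ⊆ dmap ⁻¹' N := fun y hy => hPN ⟨y, hy, rfl⟩
      have : μ (dmap ⁻¹' N) = 0 := by
        have hmap : μ (dmap ⁻¹' N) = (Measure.map dmap μ) N :=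
          (Measure.map_apply measurable_dmap hNmeas).symm
        rw [hmap, map_dmap_eq hμ, Measure.restrict_apply hNmeas]
        exact le_antisymm ((measure_mono Set.inter_subset_left).trans hN0.le) (zero_le)
      exact absurd (le_antisymm ((measure_mono hsub).trans this.le) (zero_le)) hT'pos.ne'
    · exact h0
  set Hfun := fun x : ℝ => decR (h (emap x)) with hHfun
  have hHmeas : Measurable Hfun := measurable_decR.comp (hhmeas.comp measurable_emap)
  have hfH : ∀ x ∈ P, f x = Hfun x := by
    rintro x ⟨y, hyT', rfl⟩
    have hyE : y ∉ Etail := hyT'.2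
    rw [hHfun]
    simp only
    rw [emap_dmap y hyE, ← hTeq y hyT'.1, hfstar]
    simp only
    rw [decR_encR]
  obtain ⟨g, hgcont, hgpos⟩ := lusin_lite hHmeas hPsub hPpos
  refine ⟨g, hgcont, ?_⟩
  refine hgpos.trans_le (measure_mono ?_)
  rintro x ⟨hxP, hxH⟩
  exact (hfH x hxP).trans hxH
end
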